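/- arXiv:2003.03840 — 6 statements merged into one kernel-verified Lean document; each statement's English description precedes it below -/
import Mathlib

section
/- Let b₁, b₂ be nonzero vectors in ℝⁿ whose angle θ satisfies π/3 ≤ θ ≤ 2π/3. Then min{‖α b₁ + β b₂‖ : α, β ∈ ℤ not both 0} = min{‖b₁‖, ‖b₂‖}. Moreover, if ‖b₁‖ = ‖b₂‖ and α, β are both nonzero integers, then ‖α b₁ + β b₂‖ = ‖b₁‖ if and only if either θ = π/3 and (α,β) = ±(1,−1), or θ = 2π/3 and (α,β) = ±(1,1). -/
open scoped RealInnerProductSpace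
open Submodule Metric MeasureTheory

noncomputable section

abbrev Evec (n : ℕ) := EuclideanSpace ℝ (Fin n)

/-- The lattice generated (over ℤ) by the vectors `b 0, …, b (n-1)`. -/
def latticeOf {n : ℕ} (b : Fin n → Evec n) : Set (Evec n) :=
  {x | ∃ c : Fin n → ℤ, x = ∑ i, (c i : ℝ) • b i}

/-- The set of minimal vectors `S(L)` of a lattice `L`. -/
def minVecs {n : ℕ} (L : Set (Evec n)) : Set (Evec n) :=
  {x | x ∈ L ∧ x ≠ 0 ∧ ∀ y ∈ L, y ≠ 0 → ‖x‖ ≤ ‖y‖}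

/-- `L` is well-rounded: its minimal vectors span `ℝⁿ`. -/
def IsWellRounded {n : ℕ} (L : Set (Evec n)) : Prop :=
  Submodule.span ℝ (minVecs L) = ⊤

/-- `L` has minimal norm `m`. -/
def hasMinNorm {n : ℕ} (L : Set (Evec n)) (m : ℝ) : Prop :=
  (∃ x ∈ L, x ≠ 0 ∧ ‖x‖ = m) ∧ ∀ x ∈ L, x ≠ 0 → m ≤ ‖x‖

/-- The angle in `[0, π/2]` between a vector `v` and a subspace `V`,
whose cosine is `‖proj_V v‖ / ‖v‖`. -/
def subAngle {n : ℕ} (v : Evec n) (V : Submodule ℝ (Evec n)) : ℝ :=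
  Real.arccos (‖(orthogonalProjection V v : Evec n)‖ / ‖v‖)

/-- The ordered basis `b` is weakly θ-orthogonal. -/
def WeaklyOrth {n : ℕ} (θ : ℝ) (b : Fin n → Evec n) : Prop :=
  ∀ i : Fin n, 0 < (i : ℕ) →
    θ ≤ subAngle (b i) (Submodule.span ℝ (b '' {j | j < i}))

/-- The basis `b` is θ-orthogonal: every ordering of it is weakly θ-orthogonal. -/
def Orth {n : ℕ} (θ : ℝ) (b : Fin n → Evec n) : Prop :=
  ∀ σ : Equiv.Perm (Fin n), WeaklyOrth θ (b ∘ σ)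

/-- A nearly orthogonal basis is a π/3-orthogonal basis. -/
def NearlyOrth {n : ℕ} (b : Fin n → Evec n) : Prop := Orth (Real.pi / 3) b

/-- A weakly nearly orthogonal basis is a weakly π/3-orthogonal basis. -/
def WeaklyNearlyOrth {n : ℕ} (b : Fin n → Evec n) : Prop := WeaklyOrth (Real.pi / 3) b

/-- Coherence `C(L)` of a lattice. -/
def coherence {n : ℕ} (L : Set (Evec n)) : ℝ :=
  sSup {t | ∃ x ∈ minVecs L, ∃ y ∈ minVecs L, x ≠ y ∧ x ≠ -y ∧
    t = abs ⟪x, y⟫ / (‖x‖ * ‖y‖)}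

/-- `μ(B)`: minimal absolute cosine of angles between distinct basis vectors. -/
def muB {n : ℕ} (b : Fin n → Evec n) : ℝ :=
  sInf {t | ∃ i j : Fin n, i ≠ j ∧ t = abs ⟪b i, b j⟫ / (‖b i‖ * ‖b j‖)}

/-- `ν(B)`: maximal absolute cosine of angles between distinct basis vectors. -/
def nuB {n : ℕ} (b : Fin n → Evec n) : ℝ :=
  sSup {t | ∃ i j : Fin n, i ≠ j ∧ t = abs ⟪b i, b j⟫ / (‖b i‖ * ‖b j‖)}

/-- The determinant of the lattice with basis `b`. -/
def latDet {n : ℕ} (b : Fin n → Evec n) : ℝ :=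
  |(Matrix.of fun i j : Fin n => b j i).det|

/-- Packing density of a lattice with basis `b` and minimal norm `m`:
`ω_n · m^n / (2^n · det L)`. -/
def packDensity {n : ℕ} (m : ℝ) (b : Fin n → Evec n) : ℝ :=
  (volume (ball (0 : Evec n) 1)).toReal * m ^ n / (2 ^ n * latDet b)

/-- `L` is strongly eutactic. -/
def StronglyEutactic {n : ℕ} (L : Set (Evec n)) : Prop :=
  ∃ c : ℝ, 0 < c ∧ ∀ v : Evec n, ‖v‖ ^ 2 = c * ∑ᶠ x ∈ minVecs L, ⟪v, x⟫ ^ 2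

/-- `L` is perfect: `{x xᵀ : x ∈ S(L)}` spans the symmetric `n × n` matrices. -/
def IsPerfect {n : ℕ} (L : Set (Evec n)) : Prop :=
  ∀ A : Matrix (Fin n) (Fin n) ℝ, A.IsSymm →
    A ∈ Submodule.span ℝ ((fun x : Evec n => Matrix.of fun i j => x i * x j) '' minVecs L)

end

private lemma eq_of_sq_eq_sq' {u v : ℝ} (hu : 0 ≤ u) (hv : 0 ≤ v) (h : u ^ 2 = v ^ 2) :
    u = v := by
  have h0 : (u - v) * (u + v) = 0 := by ring_nf; nlinarith [h]
  rcases mul_eq_zero.mp h0 with h1 | h1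
  · linarith
  · have : u = 0 := by linarith
    have : v = 0 := by linarith
    linarith

private lemma le_of_sq_le_sq' {u v : ℝ} (hu : 0 ≤ u) (hv : 0 ≤ v) (h : u ^ 2 ≤ v ^ 2) :
    u ≤ v := by nlinarith

set_option maxHeartbeats 1600000 in
/-- minima of `‖α b₁ + β b₂‖` over integers, and characterization of
the equality case when `‖b₁‖ = ‖b₂‖`. -/
theorem stmt_0 {n : ℕ} (b₁ b₂ : Evec n) (h₁ : b₁ ≠ 0) (h₂ : b₂ ≠ 0)
    (hθ₁ : Real.pi / 3 ≤ InnerProductGeometry.angle b₁ b₂)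
    (hθ₂ : InnerProductGeometry.angle b₁ b₂ ≤ 2 * Real.pi / 3) :
    IsLeast {r | ∃ α β : ℤ, ¬(α = 0 ∧ β = 0) ∧ r = ‖(α : ℝ) • b₁ + (β : ℝ) • b₂‖}
      (min ‖b₁‖ ‖b₂‖) ∧
    (‖b₁‖ = ‖b₂‖ → ∀ α β : ℤ, α ≠ 0 → β ≠ 0 →
      (‖(α : ℝ) • b₁ + (β : ℝ) • b₂‖ = ‖b₁‖ ↔
        (InnerProductGeometry.angle b₁ b₂ = Real.pi / 3 ∧
          ((α, β) = (1, -1) ∨ (α, β) = (-1, 1))) ∨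
        (InnerProductGeometry.angle b₁ b₂ = 2 * Real.pi / 3 ∧
          ((α, β) = (1, 1) ∨ (α, β) = (-1, -1))))) := by
  classical
  have ha : (0:ℝ) < ‖b₁‖ := norm_pos_iff.mpr h₁
  have hb : (0:ℝ) < ‖b₂‖ := norm_pos_iff.mpr h₂
  set a := ‖b₁‖ with ha_def
  set b := ‖b₂‖ with hb_def
  set x : ℝ := ⟪b₁, b₂⟫ with hx_def
  set θ := InnerProductGeometry.angle b₁ b₂ with hθ_def
  have hθ0 : 0 ≤ θ := InnerProductGeometry.angle_nonneg _ _
  have hθπ : θ ≤ Real.pi := InnerProductGeometry.angle_le_pi _ _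
  have hπ : (0:ℝ) < Real.pi := Real.pi_pos
  have hcosθ : Real.cos θ = x / (a * b) := InnerProductGeometry.cos_angle b₁ b₂
  have hc23 : Real.cos (2 * Real.pi / 3) = -(1/2) := by
    rw [show (2 * Real.pi / 3) = Real.pi - Real.pi / 3 by ring, Real.cos_pi_sub,
      Real.cos_pi_div_three]
  have hcos_hi : Real.cos θ ≤ 1/2 := by
    have := Real.cos_le_cos_of_nonneg_of_le_pi (by positivity) hθπ hθ₁
    rwa [Real.cos_pi_div_three] at this
  have hcos_lo : -(1/2) ≤ Real.cos θ := by
    have := Real.cos_le_cos_of_nonneg_of_le_pi hθ0 (by linarith) hθ₂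
    rwa [hc23] at this
  have hxval : x = Real.cos θ * (a * b) := by
    rw [hcosθ]; field_simp
  have hx_hi : x ≤ a * b / 2 := by nlinarith [mul_pos ha hb]
  have hx_lo : -(a * b / 2) ≤ x := by nlinarith [mul_pos ha hb]
  have habs : |x| ≤ a * b / 2 := abs_le.mpr ⟨hx_lo, hx_hi⟩
  have key : ∀ α β : ℤ, ‖(α:ℝ) • b₁ + (β:ℝ) • b₂‖ ^ 2
      = (α:ℝ)^2 * a^2 + 2 * (α:ℝ) * (β:ℝ) * x + (β:ℝ)^2 * b^2 := by
    intro α β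
    rw [norm_add_sq_real, norm_smul, norm_smul, real_inner_smul_left, real_inner_smul_right]
    simp only [Real.norm_eq_abs, mul_pow, sq_abs]
    ring
  have hmin0 : 0 ≤ min a b := le_min ha.le hb.le
  have hone : ∀ γ : ℤ, γ ≠ 0 → (1:ℝ) ≤ |(γ:ℝ)| := by
    intro γ hγ
    have := Int.one_le_abs hγ
    calc (1:ℝ) ≤ ((|γ|:ℤ):ℝ) := by exact_mod_cast this
      _ = |(γ:ℝ)| := by push_cast; ring
  have hquad : ∀ α β : ℤ, ¬(α = 0 ∧ β = 0) →
      min a b ^ 2 ≤ (α:ℝ)^2 * a^2 + 2 * (α:ℝ) * (β:ℝ) * x + (β:ℝ)^2 * b^2 := by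
    intro α β hαβ
    by_cases hα : α = 0
    · have hβ : β ≠ 0 := fun h => hαβ ⟨hα, h⟩
      have hB := hone β hβ
      have hB2 : (1:ℝ) ≤ (β:ℝ)^2 := by nlinarith [sq_abs (β:ℝ)]
      subst hα
      push_cast
      nlinarith [min_le_right a b, hmin0, hb]
    · by_cases hβ : β = 0
      · have hA := hone α hα
        have hA2 : (1:ℝ) ≤ (α:ℝ)^2 := by nlinarith [sq_abs (α:ℝ)]
        subst hβ
        push_cast
        nlinarith [min_le_left a b, hmin0, ha]
      · have hA := hone α hα
        have hB := hone β hβ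
        have hbound : |(α:ℝ) * (β:ℝ) * x| ≤ |(α:ℝ)| * |(β:ℝ)| * (a * b / 2) := by
          rw [abs_mul, abs_mul]
          have h0 : (0:ℝ) ≤ |(α:ℝ)| * |(β:ℝ)| := by positivity
          exact mul_le_mul_of_nonneg_left habs h0
        have h2 : -(|(α:ℝ)| * |(β:ℝ)| * (a * b / 2)) ≤ (α:ℝ) * (β:ℝ) * x :=
          (neg_le_neg hbound).trans (neg_abs_le _)
        have hminab : min a b * min a b ≤ a * b :=
          mul_le_mul (min_le_left a b) (min_le_right a b) hmin0 ha.le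
        have hAB : (1:ℝ) ≤ |(α:ℝ)| * |(β:ℝ)| := by
          have := mul_le_mul hA hB zero_le_one (abs_nonneg (α:ℝ))
          linarith
        have habab : 1 * (a * b) ≤ |(α:ℝ)| * |(β:ℝ)| * (a * b) :=
          mul_le_mul_of_nonneg_right hAB (mul_pos ha hb).le
        nlinarith [sq_nonneg (|(α:ℝ)| * a - |(β:ℝ)| * b), sq_abs (α:ℝ), sq_abs (β:ℝ),
          hminab, h2, habab]
  constructor
  · constructor
    · rcases le_total a b with h | h
      · exact ⟨1, 0, by simp, by simp [min_eq_left h, ← ha_def]⟩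
      · exact ⟨0, 1, by simp, by simp [min_eq_right h, ← hb_def]⟩
    · rintro r ⟨α, β, hαβ, rfl⟩
      have h2 := hquad α β hαβ
      rw [← key α β] at h2
      exact le_of_sq_le_sq' hmin0 (norm_nonneg _) h2
  · intro hab α β hα hβ
    have hA := hone α hα
    have hB := hone β hβ
    constructor
    · intro hnorm
      have e : (α:ℝ)^2 * a^2 + 2 * (α:ℝ) * (β:ℝ) * x + (β:ℝ)^2 * a^2 = a^2 := by
        have hk := key α β
        rw [hnorm, ← hab] at hk
        linarith [hk]
      have habs' : |x| ≤ a * a / 2 := by rw [hab]; nlinarith [habs, hab]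
      have h2 : -(|(α:ℝ)| * |(β:ℝ)| * (a * a / 2)) ≤ (α:ℝ) * (β:ℝ) * x := by
        have hbound : |(α:ℝ) * (β:ℝ) * x| ≤ |(α:ℝ)| * |(β:ℝ)| * (a * a / 2) := by
          rw [abs_mul, abs_mul]
          exact mul_le_mul_of_nonneg_left habs' (by positivity)
        exact (neg_le_neg hbound).trans (neg_abs_le _)
      have ha2 : (0:ℝ) < a^2 := by positivity
      have hR : (α:ℝ)^2 + (β:ℝ)^2 ≤ |(α:ℝ)| * |(β:ℝ)| + 1 := by nlinarith [e, h2]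
      have hZ : α^2 + β^2 ≤ |α| * |β| + 1 := by exact_mod_cast (by push_cast; exact hR :
        ((α^2 + β^2 : ℤ) : ℝ) ≤ ((|α| * |β| + 1 : ℤ) : ℝ))
      have hA1 : (1:ℤ) ≤ |α| := Int.one_le_abs hα
      have hB1 : (1:ℤ) ≤ |β| := Int.one_le_abs hβ
      have huv : |α| * |β| ≤ 1 := by nlinarith [sq_nonneg (|α| - |β|), sq_abs α, sq_abs β]
      have hα1 : |α| = 1 := le_antisymm (by nlinarith) hA1
      have hβ1 : |β| = 1 := le_antisymm (by nlinarith) hB1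
      have hθeq13 : Real.cos θ = 1/2 → θ = Real.pi / 3 := by
        intro hc
        refine Real.injOn_cos ⟨hθ0, hθπ⟩ ⟨by positivity, by linarith⟩ ?_
        rw [hc, Real.cos_pi_div_three]
      have hθeq23 : Real.cos θ = -(1/2) → θ = 2 * Real.pi / 3 := by
        intro hc
        refine Real.injOn_cos ⟨hθ0, hθπ⟩ ⟨by positivity, by linarith⟩ ?_
        rw [hc, hc23]
      have hcx : ∀ c : ℝ, x = c * a^2 → Real.cos θ = c := by
        intro c hc
        rw [hcosθ, ← hab, hc, show a * a = a ^ 2 by ring, mul_div_assoc,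
          div_self (by positivity : (a:ℝ) ^ 2 ≠ 0), mul_one]
      rcases (abs_eq (by norm_num : (0:ℤ) ≤ 1)).mp hα1 with rfl | rfl <;>
        rcases (abs_eq (by norm_num : (0:ℤ) ≤ 1)).mp hβ1 with rfl | rfl
      · -- α = 1, β = 1
        push_cast at e
        refine Or.inr ⟨hθeq23 (hcx _ (by linarith)), Or.inl rfl⟩
      · push_cast at e
        refine Or.inl ⟨hθeq13 (hcx _ (by linarith)), Or.inl rfl⟩
      · push_cast at e
        refine Or.inl ⟨hθeq13 (hcx _ (by linarith)), Or.inr rfl⟩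
      · push_cast at e
        refine Or.inr ⟨hθeq23 (hcx _ (by linarith)), Or.inr rfl⟩
    · have hnormeq : ∀ c : ℝ, x = c * a^2 →
          (α:ℝ)^2 + 2 * (α:ℝ) * (β:ℝ) * c + (β:ℝ)^2 = 1 →
          ‖(α:ℝ) • b₁ + (β:ℝ) • b₂‖ = a := by
        intro c hc heq
        have hk := key α β
        rw [← hab, hc] at hk
        refine eq_of_sq_eq_sq' (norm_nonneg _) ha.le ?_
        rw [hk]; nlinarith [heq, sq_nonneg a]
      have hxc : ∀ c : ℝ, Real.cos θ = c → x = c * a^2 := by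
        intro c hc
        rw [hxval, hc, ← hab]; ring
      rintro (⟨hθeq, hαβ | hαβ⟩ | ⟨hθeq, hαβ | hαβ⟩) <;>
        obtain ⟨rfl, rfl⟩ := Prod.mk.injEq .. ▸ Prod.ext_iff.mp hαβ
      · refine hnormeq (1/2) (hxc _ (by rw [hθeq, Real.cos_pi_div_three])) (by push_cast; ring)
      · refine hnormeq (1/2) (hxc _ (by rw [hθeq, Real.cos_pi_div_three])) (by push_cast; ring)
      · refine hnormeq (-(1/2)) (hxc _ (by rw [hθeq, hc23])) (by push_cast; ring)
      · refine hnormeq (-(1/2)) (hxc _ (by rw [hθeq, hc23])) (by push_cast; ring)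
end

section
/- Let b₁, b₂, b₃ be linearly independent vectors in ℝⁿ with n ≥ 3, and suppose the cosine of the angle between b₁ and b₃ and the cosine of the angle between b₂ and b₃ are both equal to some α > 0. Let ξ be the angle between z = b₁ + b₂ and b₃. Then |cos ξ| > α; consequently the cosine of the angle between b₃ and the plane span_ℝ{b₁, b₂} is strictly greater than α, i.e., b₃ makes a smaller angle with that plane than with each of b₁ and b₂. -/
open scoped RealInnerProductSpace
open Submodule Metric MeasureTheory

/-! The hypotheses give `⟪b₁ + b₂, b₃⟫ = α (‖b₁‖ + ‖b₂‖) ‖b₃‖`, while `‖b₁ + b₂‖ < ‖b₁‖ + ‖b₂‖`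
because `b₁, b₂` are not parallel; hence the cosine of the angle between `b₁ + b₂` and `b₃`
exceeds `α`. For the plane `V`, every `z ∈ V` satisfies
`|⟪z, v⟫| = |⟪z, proj_V v⟫| ≤ ‖z‖ ‖proj_V v‖`, so the cosine of the angle between `v` and `V`
dominates `|cos ∠(z, v)|`. -/

open InnerProductGeometry

section

variable {E : Type*} [NormedAddCommGroup E] [InnerProductSpace ℝ E]

theorem abs_cos_angle_le_norm_starProjection_div_norm (K : Submodule ℝ E)
    [K.HasOrthogonalProjection] {z : E} (hz : z ∈ K) (v : E) :
    |Real.cos (angle z v)| ≤ ‖K.starProjection v‖ / ‖v‖ := by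
  rcases eq_or_ne z 0 with rfl | hz0
  · simp [angle_zero_left, div_nonneg]
  rcases eq_or_ne v 0 with rfl | hv0
  · simp [angle_zero_right]
  have hinner : ⟪z, v⟫ = ⟪z, K.starProjection v⟫ := by
    have := K.starProjection_inner_eq_zero v z hz
    rw [inner_sub_left, sub_eq_zero, real_inner_comm z v, real_inner_comm z] at this
    exact this
  rw [le_div_iff₀ (norm_pos_iff.2 hv0)]
  refine le_of_mul_le_mul_left ?_ (norm_pos_iff.2 hz0)
  calc ‖z‖ * (|Real.cos (angle z v)| * ‖v‖)
      = |Real.cos (angle z v) * (‖z‖ * ‖v‖)| := by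
        rw [abs_mul, abs_of_nonneg (by positivity : 0 ≤ ‖z‖ * ‖v‖)]; ring
    _ = |⟪z, K.starProjection v⟫| := by rw [cos_angle_mul_norm_mul_norm, hinner]
    _ ≤ ‖z‖ * ‖K.starProjection v‖ := abs_real_inner_le_norm _ _

theorem lt_cos_angle_add_of_cos_angle_eq {x y v : E} {α : ℝ} (hα : 0 < α)
    (hxy : ¬SameRay ℝ x y) (hx : Real.cos (angle x v) = α) (hy : Real.cos (angle y v) = α) :
    α < Real.cos (angle (x + y) v) := by
  have hx0 : x ≠ 0 := by rintro rfl; simp [angle_zero_left] at hx; linarith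
  have hv0 : v ≠ 0 := by rintro rfl; simp [angle_zero_right] at hx; linarith
  have hinner : ⟪x + y, v⟫ = α * ((‖x‖ + ‖y‖) * ‖v‖) := by
    rw [inner_add_left, ← cos_angle_mul_norm_mul_norm x v, ← cos_angle_mul_norm_mul_norm y v,
      hx, hy]
    ring
  have hxy0 : x + y ≠ 0 := by
    rintro h
    rw [h, inner_zero_left] at hinner
    have : 0 < α * ((‖x‖ + ‖y‖) * ‖v‖) := by positivity
    linarith
  rw [cos_angle, hinner, ← mul_assoc, mul_div_mul_right _ _ (norm_ne_zero_iff.2 hv0),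
    lt_div_iff₀ (norm_pos_iff.2 hxy0)]
  exact mul_lt_mul_of_pos_left (norm_add_lt_of_not_sameRay hxy) hα

end

theorem cos_subAngle {n : ℕ} (v : Evec n) (V : Submodule ℝ (Evec n)) :
    Real.cos (subAngle v V) = ‖V.starProjection v‖ / ‖v‖ :=
  Real.cos_arccos (neg_one_lt_zero.le.trans (by positivity))
    (div_le_one_of_le₀ (V.norm_starProjection_apply_le v) (norm_nonneg v))

theorem stmt_1_general {n : ℕ} (b₁ b₂ b₃ : Evec n)
    (hli : LinearIndependent ℝ ![b₁, b₂, b₃]) (α : ℝ) (hα : 0 < α)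
    (h13 : Real.cos (InnerProductGeometry.angle b₁ b₃) = α)
    (h23 : Real.cos (InnerProductGeometry.angle b₂ b₃) = α) :
    α < |Real.cos (InnerProductGeometry.angle (b₁ + b₂) b₃)| ∧
    α < Real.cos (subAngle b₃ (Submodule.span ℝ {b₁, b₂})) := by
  have hpair : LinearIndependent ℝ ![b₁, b₂] := by
    convert hli.comp Fin.castSucc (Fin.castSucc_injective 2) using 1
    ext i; fin_cases i <;> rfl
  have hray : ¬SameRay ℝ b₁ b₂ :=
    fun h ↦ sameRay_or_sameRay_neg_iff_not_linearIndependent.1 (Or.inl h) hpair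
  have hlt := (lt_cos_angle_add_of_cos_angle_eq hα hray h13 h23).trans_le (le_abs_self _)
  refine ⟨hlt, hlt.trans_le ?_⟩
  rw [cos_subAngle]
  exact abs_cos_angle_le_norm_starProjection_div_norm _
    (add_mem (subset_span (by simp)) (subset_span (by simp))) b₃

/-- if `b₃` makes equal acute angles with `b₁` and `b₂`, it makes a
smaller angle with `b₁ + b₂` and with the plane spanned by `b₁, b₂`. -/
theorem stmt_1 {n : ℕ} (hn : 3 ≤ n) (b₁ b₂ b₃ : Evec n)
    (hli : LinearIndependent ℝ ![b₁, b₂, b₃]) (α : ℝ) (hα : 0 < α)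
    (h13 : Real.cos (InnerProductGeometry.angle b₁ b₃) = α)
    (h23 : Real.cos (InnerProductGeometry.angle b₂ b₃) = α) :
    α < |Real.cos (InnerProductGeometry.angle (b₁ + b₂) b₃)| ∧
    α < Real.cos (subAngle b₃ (Submodule.span ℝ {b₁, b₂})) :=
  stmt_1_general b₁ b₂ b₃ hli α hα h13 h23
end

section
/- Let L be a well-rounded lattice in ℝⁿ with a weakly nearly orthogonal ordered basis B = (b₁,…,bₙ). Then for each 1 ≤ k ≤ n the sublattice L_k = span_ℤ{b₁,…,b_k} is well-rounded, i.e., the minimal vectors of L_k span the real subspace span_ℝ{b₁,…,b_k}. -/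
/-! Write a vector `x` of minimal norm `m` as `u + c • bₜ`, where `t` is the top index of its
support and `u` lies in the lattice of the earlier basis vectors. Weak `π/3`-orthogonality
puts `bₜ` at distance at least `(√3/2)‖bₜ‖ ≥ (√3/2) m` from the span of the earlier vectors,
which forces `|c| = 1`, and then `‖u‖ ≤ m` and `‖bₜ‖ = m`. By induction on `t`, every minimal
vector lies in the span of the basis vectors of norm `m`. As `L` is well-rounded and the `bᵢ`
are linearly independent, every `bᵢ` has norm `m`; so each `bᵢ` is a minimal vector of `L`,
hence of every `L_k ⊆ L`. -/

open scoped RealInnerProductSpace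
open Submodule Metric MeasureTheory

section StepLemma

variable {E : Type*} [NormedAddCommGroup E] [InnerProductSpace ℝ E]
  {V : Submodule ℝ E} [V.HasOrthogonalProjection]

lemma norm_add_smul_sq_of_mem {u : E} (hu : u ∈ V) (b : E) (r : ℝ) :
    ‖u + r • b‖ ^ 2 =
      ‖u + r • V.starProjection b‖ ^ 2 + r ^ 2 * (‖b‖ ^ 2 - ‖V.starProjection b‖ ^ 2) := by
  set p := V.starProjection b
  have hq : b - p ∈ Vᗮ := V.sub_starProjection_mem_orthogonal b
  have pythagoras : ∀ v ∈ V, ∀ s : ℝ, ‖v + s • (b - p)‖ ^ 2 = ‖v‖ ^ 2 + s ^ 2 * ‖b - p‖ ^ 2 := by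
    intro v hv s
    rw [norm_add_sq_real, inner_smul_right, (V.mem_orthogonal _).mp hq v hv, norm_smul,
      Real.norm_eq_abs, mul_pow, sq_abs]
    ring
  have hb := pythagoras p (V.starProjection_apply_mem b) 1
  have hx := pythagoras (u + r • p) (V.add_mem hu (V.smul_mem r (V.starProjection_apply_mem b))) r
  rw [one_smul, add_sub_cancel, one_pow, one_mul] at hb
  rw [add_assoc, ← smul_add, add_sub_cancel] at hx
  rw [hx, hb]
  ring

lemma norm_eq_and_norm_le_of_norm_add_zsmul_eq {u b : E} {m : ℝ} {c : ℤ} (hm : 0 < m)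
    (hu : u ∈ V) (hproj : 2 * ‖V.starProjection b‖ ≤ ‖b‖) (hb : m ≤ ‖b‖) (hc : c ≠ 0)
    (hmin : u ≠ 0 → m ≤ ‖u‖) (hx : ‖u + (c : ℝ) • b‖ = m) : ‖b‖ = m ∧ ‖u‖ ≤ m := by
  set p := V.starProjection b
  have hpyth := norm_add_smul_sq_of_mem hu b c
  rw [hx] at hpyth
  set a := ‖u + (c : ℝ) • p‖
  have ha : 0 ≤ a := norm_nonneg _
  have hp : 0 ≤ ‖p‖ := norm_nonneg _
  have hdist : 3 / 4 * ‖b‖ ^ 2 ≤ ‖b‖ ^ 2 - ‖p‖ ^ 2 := by nlinarith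
  -- `c² · (3/4)‖b‖² ≤ ‖u + c • b‖² = m² ≤ ‖b‖²`
  have hc_abs : |(c : ℝ)| = 1 := by
    have hc_sq : (c : ℝ) ^ 2 < 2 := by
      by_contra! h
      nlinarith [mul_le_mul h hdist (by positivity) (by positivity)]
    have hc_sq' : c ^ 2 < 2 := by exact_mod_cast hc_sq
    have : c = 1 ∨ c = -1 := by
      have : -1 ≤ c := by nlinarith
      have : c ≤ 1 := by nlinarith
      omega
    rcases this with rfl | rfl <;> simp
  have hc_sq : (c : ℝ) ^ 2 = 1 := by rw [← sq_abs, hc_abs, one_pow]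
  rw [hc_sq, one_mul] at hpyth
  have ha_sq : a ^ 2 ≤ m ^ 2 - 3 / 4 * ‖b‖ ^ 2 := by linarith
  have hbm : 0 ≤ m - ‖b‖ / 2 := by nlinarith
  have ha_le : a ≤ m - ‖b‖ / 2 :=
    (pow_le_pow_iff_left₀ ha hbm two_ne_zero).mp (by nlinarith)
  have hu_le : ‖u‖ ≤ a + ‖p‖ :=
    calc ‖u‖ = ‖(u + (c : ℝ) • p) - (c : ℝ) • p‖ := by rw [add_sub_cancel_right]
      _ ≤ a + ‖(c : ℝ) • p‖ := norm_sub_le _ _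
      _ = a + ‖p‖ := by rw [norm_smul, Real.norm_eq_abs, hc_abs, one_mul]
  refine ⟨?_, by linarith⟩
  by_cases hu0 : u = 0
  · rwa [hu0, zero_add, norm_smul, Real.norm_eq_abs, hc_abs, one_mul] at hx
  · have ha_ge : m - ‖b‖ / 2 ≤ a := by linarith [hmin hu0]
    have := (pow_le_pow_left₀ hbm ha_ge 2)
    nlinarith

end StepLemma

/-- `L_k`, spanned by `b 0, …, b (k - 1)`. -/
def prefixLattice {n : ℕ} (b : Fin n → Evec n) (k : ℕ) : Set (Evec n) :=
  {x | ∃ c : Fin n → ℤ, (∀ i : Fin n, k ≤ (i : ℕ) → c i = 0) ∧ x = ∑ i, (c i : ℝ) • b i}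

section Lattice

variable {n : ℕ} (b : Fin n → Evec n)

lemma basis_mem_prefixLattice {k : ℕ} {i : Fin n} (hi : (i : ℕ) < k) : b i ∈ prefixLattice b k :=
  ⟨Pi.single i 1, fun j hj => Pi.single_eq_of_ne (by rintro rfl; omega) _, by
    simp [Pi.single_apply]⟩

lemma prefixLattice_subset_latticeOf (k : ℕ) : prefixLattice b k ⊆ latticeOf b :=
  fun _ ⟨c, _, hx⟩ => ⟨c, hx⟩

lemma basis_mem_latticeOf (i : Fin n) : b i ∈ latticeOf b :=
  prefixLattice_subset_latticeOf b n (basis_mem_prefixLattice b i.isLt)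

lemma exists_add_zsmul_of_mem_prefixLattice_succ {t : ℕ} (ht : t < n) {x : Evec n}
    (hx : x ∈ prefixLattice b (t + 1)) :
    ∃ u ∈ prefixLattice b t, ∃ c : ℤ, x = u + (c : ℝ) • b ⟨t, ht⟩ := by
  classical
  obtain ⟨c, hc, rfl⟩ := hx
  set T : Fin n := ⟨t, ht⟩
  refine ⟨_, ⟨Function.update c T 0, fun i hi => ?_, rfl⟩, c T, ?_⟩
  · rcases eq_or_ne i T with rfl | hiT
    · simp
    · rw [Function.update_of_ne hiT]
      exact hc i (by have : (i : ℕ) ≠ t := fun h => hiT (Fin.ext h); omega)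
  · have hsplit : ∀ i, (c i : ℝ) • b i =
        ((Function.update c T 0 i : ℤ) : ℝ) • b i + if i = T then (c T : ℝ) • b T else 0 := by
      intro i
      rcases eq_or_ne i T with rfl | hiT
      · simp
      · simp [hiT]
    rw [Finset.sum_congr rfl fun i _ => hsplit i, Finset.sum_add_distrib, Finset.sum_ite_eq']
    simp

lemma latticeOf_subset_prefixLattice : latticeOf b ⊆ prefixLattice b n :=
  fun _ ⟨c, hx⟩ => ⟨c, fun i hi => absurd i.isLt (not_lt.mpr hi), hx⟩

lemma prefixLattice_subset_span (k : ℕ) :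
    prefixLattice b k ⊆ span ℝ (b '' {i | (i : ℕ) < k}) := by
  rintro _ ⟨c, hc, rfl⟩
  refine Submodule.sum_mem _ fun i _ => ?_
  by_cases hi : (i : ℕ) < k
  · exact Submodule.smul_mem _ _ (subset_span ⟨i, hi, rfl⟩)
  · simp [hc i (not_lt.mp hi)]

lemma norm_starProjection_le_cos_mul_of_weaklyOrth {θ : ℝ} (h : WeaklyOrth θ b) (hθ₀ : 0 ≤ θ)
    (hθ : θ ≤ Real.pi / 2) (i : Fin n) :
    ‖(span ℝ (b '' {j | j < i})).starProjection (b i)‖ ≤ Real.cos θ * ‖b i‖ := by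
  set V := span ℝ (b '' {j | j < i})
  have hcos : 0 ≤ Real.cos θ := Real.cos_nonneg_of_mem_Icc ⟨by linarith [Real.pi_pos], hθ⟩
  rcases Nat.eq_zero_or_pos (i : ℕ) with hi | hi
  · have hV : V = ⊥ := by
      rw [span_eq_bot]
      rintro _ ⟨j, hj, rfl⟩
      exact absurd hj (by simp [Fin.lt_def, hi])
    simp only [hV, starProjection_bot, zero_apply, norm_zero]
    exact mul_nonneg hcos (norm_nonneg _)
  have hle : ‖V.starProjection (b i)‖ ≤ ‖b i‖ := by
    rw [starProjection_apply]
    exact V.norm_orthogonalProjectionOnto_apply_le _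
  rcases (norm_nonneg (b i)).eq_or_lt with hb | hb
  · rw [← hb] at hle ⊢
    simpa using hle
  have hratio : 0 ≤ ‖V.starProjection (b i)‖ / ‖b i‖ := by positivity
  have hratio' : ‖V.starProjection (b i)‖ / ‖b i‖ ≤ 1 := (div_le_one hb).mpr hle
  have hangle := h i hi
  rw [subAngle, ← starProjection_apply] at hangle
  have := Real.cos_le_cos_of_nonneg_of_le_pi hθ₀ (Real.arccos_le_pi _) hangle
  rw [Real.cos_arccos (by linarith) hratio'] at this
  rwa [div_le_iff₀ hb] at this

lemma two_mul_norm_starProjection_le_of_weaklyNearlyOrth (h : WeaklyNearlyOrth b) (i : Fin n) :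
    2 * ‖(span ℝ (b '' {j | j < i})).starProjection (b i)‖ ≤ ‖b i‖ := by
  have := norm_starProjection_le_cos_mul_of_weaklyOrth b h (by positivity)
    (by linarith [Real.pi_pos]) i
  rw [Real.cos_pi_div_three] at this
  linarith

variable {b}

lemma mem_span_of_norm_eq_of_mem_prefixLattice (hb : LinearIndependent ℝ b)
    (hWNO : WeaklyNearlyOrth b) {m : ℝ} (hm : hasMinNorm (latticeOf b) m) {t : ℕ} (ht : t ≤ n)
    {x : Evec n} (hx : x ∈ prefixLattice b t) (hxm : ‖x‖ = m) :
    x ∈ span ℝ (b '' {i | ‖b i‖ = m}) := by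
  obtain ⟨⟨x₀, -, hx₀, rfl⟩, hmin⟩ := hm
  have hm₀ : 0 < ‖x₀‖ := norm_pos_iff.mpr hx₀
  induction t generalizing x with
  | zero =>
    obtain ⟨c, hc, rfl⟩ := hx
    simp [hc _ (Nat.zero_le _)] at hxm
    linarith
  | succ t ih =>
    obtain ⟨u, hu, c, rfl⟩ := exists_add_zsmul_of_mem_prefixLattice_succ b ht hx
    rcases eq_or_ne c 0 with rfl | hc
    · simp only [Int.cast_zero, zero_smul, add_zero] at hxm ⊢
      exact ih (by omega) hu hxm
    have huL := prefixLattice_subset_latticeOf b t hu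
    set T : Fin n := ⟨t, ht⟩
    have huV : u ∈ span ℝ (b '' {j | j < T}) := prefixLattice_subset_span b t hu
    obtain ⟨hbt, hu_le⟩ := norm_eq_and_norm_le_of_norm_add_zsmul_eq hm₀ huV
      (two_mul_norm_starProjection_le_of_weaklyNearlyOrth b hWNO T)
      (hmin _ (basis_mem_latticeOf b T) (hb.ne_zero T))
      hc (hmin u huL) hxm
    refine add_mem ?_ (smul_mem _ _ (subset_span ⟨_, hbt, rfl⟩))
    rcases eq_or_ne u 0 with rfl | hu0
    · exact zero_mem _
    · exact ih (by omega) hu (le_antisymm hu_le (hmin u huL hu0))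

end Lattice

section MinimalVectors

variable {n : ℕ}

lemma minVecs_nonempty_of_isWellRounded {L : Set (Evec n)} (h : IsWellRounded L) (hn : 0 < n) :
    (minVecs L).Nonempty := by
  have : Nonempty (Fin n) := ⟨⟨0, hn⟩⟩
  by_contra hL
  rw [Set.not_nonempty_iff_eq_empty] at hL
  rw [IsWellRounded, hL, span_empty] at h
  exact bot_ne_top h

lemma hasMinNorm_norm_of_mem_minVecs {L : Set (Evec n)} {x : Evec n} (hx : x ∈ minVecs L) :
    hasMinNorm L ‖x‖ :=
  ⟨⟨x, hx.1, hx.2.1, rfl⟩, hx.2.2⟩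

lemma mem_minVecs_of_subset {L L' : Set (Evec n)} {x : Evec n} (hx : x ∈ minVecs L)
    (hL : L' ⊆ L) (hx' : x ∈ L') : x ∈ minVecs L' :=
  ⟨hx', hx.2.1, fun y hy => hx.2.2 y (hL hy)⟩

lemma basis_mem_minVecs_of_isWellRounded {b : Fin n → Evec n} (hb : LinearIndependent ℝ b)
    (hWNO : WeaklyNearlyOrth b) (hWR : IsWellRounded (latticeOf b)) (i : Fin n) :
    b i ∈ minVecs (latticeOf b) := by
  obtain ⟨x₀, hx₀⟩ := minVecs_nonempty_of_isWellRounded hWR i.pos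
  have hspan : span ℝ (b '' {j | ‖b j‖ = ‖x₀‖}) = ⊤ := by
    rw [eq_top_iff, ← hWR, span_le]
    intro x hx
    exact mem_span_of_norm_eq_of_mem_prefixLattice hb hWNO (hasMinNorm_norm_of_mem_minVecs hx₀)
      le_rfl (latticeOf_subset_prefixLattice b hx.1)
      (le_antisymm (hx.2.2 x₀ hx₀.1 hx₀.2.1) (hx₀.2.2 x hx.1 hx.2.1))
  have hbi : ‖b i‖ = ‖x₀‖ := by
    by_contra hbi
    exact hb.notMem_span_image hbi (hspan ▸ mem_top)
  exact ⟨basis_mem_latticeOf b i, hb.ne_zero i,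
    fun y hy hy0 => hbi ▸ hx₀.2.2 y hy hy0⟩

end MinimalVectors

theorem stmt_2_general {n : ℕ} (b : Fin n → Evec n) (hb : LinearIndependent ℝ b)
    (hWNO : WeaklyNearlyOrth b) (hWR : IsWellRounded (latticeOf b))
    (k : ℕ) :
    Submodule.span ℝ
      (minVecs {x | ∃ c : Fin n → ℤ, (∀ i : Fin n, k ≤ (i : ℕ) → c i = 0) ∧
        x = ∑ i, (c i : ℝ) • b i}) =
    Submodule.span ℝ (b '' {i | (i : ℕ) < k}) := by
  change span ℝ (minVecs (prefixLattice b k)) = _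
  refine le_antisymm (span_le.mpr fun x hx => prefixLattice_subset_span b k hx.1) (span_mono ?_)
  rintro _ ⟨i, hi, rfl⟩
  exact mem_minVecs_of_subset (basis_mem_minVecs_of_isWellRounded hb hWNO hWR i)
    (prefixLattice_subset_latticeOf b k) (basis_mem_prefixLattice b hi)

/-- sublattices spanned by initial segments of a weakly nearly
orthogonal basis of a well-rounded lattice are well-rounded. -/
theorem stmt_2 {n : ℕ} (b : Fin n → Evec n) (hb : LinearIndependent ℝ b)
    (hWNO : WeaklyNearlyOrth b) (hWR : IsWellRounded (latticeOf b))
    (k : ℕ) (hk1 : 1 ≤ k) (hkn : k ≤ n) :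
    Submodule.span ℝ
      (minVecs {x | ∃ c : Fin n → ℤ, (∀ i : Fin n, k ≤ (i : ℕ) → c i = 0) ∧
        x = ∑ i, (c i : ℝ) • b i}) =
    Submodule.span ℝ (b '' {i | (i : ℕ) < k}) :=
  stmt_2_general b hb hWNO hWR k
end

section
/- Let L be a well-rounded lattice in ℝⁿ possessing a nearly orthogonal basis, and let B be any nearly orthogonal basis of L. Then every vector of B is a minimal vector of L, i.e., B ⊆ S(L). -/
open scoped RealInnerProductSpace
open Submodule Metric MeasureTheory

/-!
Fix `j` and let `W` be the span of the other basis vectors. Listing `b j` last, near-orthogonality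
bounds the projection of `b j` onto `W` by `‖b j‖ / 2`, hence `2 |⟪b j, v⟫| ≤ ‖b j‖ ‖v‖` for
`v ∈ W`. As the minimal vectors span the space, some minimal vector `x = c • b j + v`, with
`v ∈ W` a lattice vector, lies outside `W`, so `c` is a nonzero integer. If `v = 0` then
`‖x‖ = |c| ‖b j‖ ≥ ‖b j‖`; otherwise `‖v‖ ≥ ‖x‖` and
`‖x‖² ≥ c² ‖b j‖² - |c| ‖b j‖ ‖v‖ + ‖v‖² ≥ |c| ‖b j‖ ‖v‖ ≥ ‖b j‖ ‖x‖`.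
Either way `‖b j‖ ≤ ‖x‖`, so `b j` is minimal.
-/

open Real

section InnerProductSpace

variable {E : Type*} [NormedAddCommGroup E] [InnerProductSpace ℝ E]

lemma abs_inner_le_norm_starProjection_mul_norm (K : Submodule ℝ E) [K.HasOrthogonalProjection]
    (u : E) {v : E} (hv : v ∈ K) : |⟪u, v⟫| ≤ ‖K.starProjection u‖ * ‖v‖ := by
  have : ⟪u, v⟫ = ⟪K.starProjection u, v⟫ := by
    rw [K.inner_starProjection_left_eq_right, K.starProjection_eq_self_iff.2 hv]
  exact this ▸ abs_real_inner_le_norm _ _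

lemma norm_le_norm_smul_add {u v : E} {c : ℝ} (hc : 1 ≤ |c|)
    (huv : 2 * |⟪u, v⟫| ≤ ‖u‖ * ‖v‖) (hv : v ≠ 0 → ‖c • u + v‖ ≤ ‖v‖) :
    ‖u‖ ≤ ‖c • u + v‖ := by
  rcases eq_or_ne v 0 with rfl | hv0
  · rw [add_zero, norm_smul, Real.norm_eq_abs]
    exact le_mul_of_one_le_left (norm_nonneg u) hc
  have hexp : ‖c • u + v‖ ^ 2 = |c| ^ 2 * ‖u‖ ^ 2 + 2 * (c * ⟪u, v⟫) + ‖v‖ ^ 2 := by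
    rw [norm_add_sq_real, norm_smul, real_inner_smul_left, Real.norm_eq_abs]
    ring
  have hcross : -(|c| * (‖u‖ * ‖v‖)) ≤ 2 * (c * ⟪u, v⟫) := by
    have := neg_abs_le (c * ⟪u, v⟫)
    rw [abs_mul] at this
    nlinarith [abs_nonneg c]
  have hsq : ‖u‖ * ‖v‖ ≤ ‖c • u + v‖ ^ 2 := by
    nlinarith [sq_nonneg (|c| * ‖u‖ - ‖v‖),
      mul_le_mul_of_nonneg_right hc (mul_nonneg (norm_nonneg u) (norm_nonneg v))]
  by_contra! hlt
  nlinarith [mul_lt_mul_of_pos_right hlt (norm_pos_iff.2 hv0),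
    mul_le_mul_of_nonneg_left (hv hv0) (norm_nonneg (c • u + v))]

end InnerProductSpace

lemma Fin.image_swap_last_setOf_lt_last {m : ℕ} (j : Fin (m + 1)) :
    Equiv.swap j (Fin.last m) '' {k | k < Fin.last m} = {i | i ≠ j} := by
  ext i
  simp [Equiv.image_eq_preimage_symm, Fin.lt_last_iff_ne_last, Equiv.swap_apply_eq_iff]

variable {n : ℕ}

lemma norm_starProjection_le_of_le_subAngle {θ : ℝ} {v : Evec n} {V : Submodule ℝ (Evec n)}
    (hθ : 0 ≤ θ) (h : θ ≤ subAngle v V) : ‖V.starProjection v‖ ≤ cos θ * ‖v‖ := by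
  rcases eq_or_ne v 0 with rfl | hv
  · simp
  have hv' : 0 < ‖v‖ := norm_pos_iff.2 hv
  change θ ≤ arccos (‖V.starProjection v‖ / ‖v‖) at h
  have hcos := cos_le_cos_of_nonneg_of_le_pi hθ (arccos_le_pi _) h
  rwa [cos_arccos (neg_one_lt_zero.le.trans (by positivity))
    (div_le_one_of_le₀ (V.norm_starProjection_apply_le v) hv'.le), div_le_iff₀ hv'] at hcos

lemma Orth.le_subAngle_span_compl {θ : ℝ} {b : Fin n → Evec n} (h : Orth θ b)
    (hθ : θ ≤ π / 2) (j : Fin n) : θ ≤ subAngle (b j) (span ℝ (b '' {i | i ≠ j})) := by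
  obtain ⟨m, rfl⟩ := Nat.exists_eq_succ_of_ne_zero j.pos.ne'
  rcases Nat.eq_zero_or_pos m with rfl | hm
  · have : {i : Fin 1 | i ≠ j} = ∅ := by ext i; simp [Subsingleton.elim i j]
    simpa [subAngle, this] using hθ
  · have := h (Equiv.swap j (Fin.last m)) (Fin.last m) hm
    rwa [Function.comp_apply, Equiv.swap_apply_right, Set.image_comp,
      Fin.image_swap_last_setOf_lt_last] at this

lemma NearlyOrth.two_mul_abs_inner_le {b : Fin n → Evec n} (h : NearlyOrth b) (j : Fin n)
    {v : Evec n} (hv : v ∈ span ℝ (b '' {i | i ≠ j})) : 2 * |⟪b j, v⟫| ≤ ‖b j‖ * ‖v‖ := by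
  have hproj := norm_starProjection_le_of_le_subAngle (by positivity)
    (Orth.le_subAngle_span_compl h (by linarith [pi_pos]) j)
  rw [cos_pi_div_three] at hproj
  linarith [abs_inner_le_norm_starProjection_mul_norm _ (b j) hv,
    mul_le_mul_of_nonneg_right hproj (norm_nonneg v)]

lemma mem_latticeOf_self (b : Fin n → Evec n) (j : Fin n) : b j ∈ latticeOf b :=
  ⟨Pi.single j 1, by simp [Pi.single_apply]⟩

lemma exists_eq_smul_add_mem_span_compl {b : Fin n → Evec n} {x : Evec n}
    (hx : x ∈ latticeOf b) (j : Fin n) :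
    ∃ c : ℤ, ∃ v ∈ latticeOf b, v ∈ span ℝ (b '' {i | i ≠ j}) ∧ x = (c : ℝ) • b j + v := by
  obtain ⟨c, rfl⟩ := hx
  refine ⟨c j, _, ⟨Function.update c j 0, rfl⟩, ?_, ?_⟩
  · refine sum_mem fun i _ => ?_
    rcases eq_or_ne i j with rfl | hi
    · simp
    · exact smul_mem _ _ (subset_span ⟨i, hi, rfl⟩)
  · rw [Fintype.sum_eq_add_sum_compl j, Fintype.sum_eq_add_sum_compl j]
    simp only [Function.update_self, Int.cast_zero, zero_smul, zero_add]
    congr 1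
    refine Finset.sum_congr rfl fun i hi => ?_
    rw [Function.update_of_ne (by simpa using hi)]

lemma IsWellRounded.exists_mem_minVecs_notMem {L : Set (Evec n)} (h : IsWellRounded L)
    {W : Submodule ℝ (Evec n)} (hW : W ≠ ⊤) : ∃ x ∈ minVecs L, x ∉ W := by
  by_contra! hsub
  exact hW (top_le_iff.1 (h ▸ span_le.2 hsub))

lemma mem_minVecs_of_norm_le {L : Set (Evec n)} {x y : Evec n} (hy : y ∈ L) (hy0 : y ≠ 0)
    (hx : x ∈ minVecs L) (hyx : ‖y‖ ≤ ‖x‖) : y ∈ minVecs L :=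
  ⟨hy, hy0, fun z hz hz0 => hyx.trans (hx.2.2 z hz hz0)⟩

/-- every vector of a nearly orthogonal basis of a well-rounded
lattice is a minimal vector. -/
theorem stmt_3 {n : ℕ} (b : Fin n → Evec n) (hb : LinearIndependent ℝ b)
    (hWR : IsWellRounded (latticeOf b)) (hNO : NearlyOrth b) :
    ∀ i, b i ∈ minVecs (latticeOf b) := by
  intro j
  set W := span ℝ (b '' {i | i ≠ j})
  have hbW : b j ∉ W := hb.notMem_span_image (by simp)
  obtain ⟨x, hx, hxW⟩ := hWR.exists_mem_minVecs_notMem (W := W) fun h => hbW (h ▸ mem_top)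
  obtain ⟨c, v, hvL, hvW, rfl⟩ := exists_eq_smul_add_mem_span_compl hx.1 j
  have hc : c ≠ 0 := by
    rintro rfl
    exact hxW (by simpa using hvW)
  refine mem_minVecs_of_norm_le (mem_latticeOf_self b j) (hb.ne_zero j) hx ?_
  exact norm_le_norm_smul_add (by exact_mod_cast Int.one_le_abs hc)
    (hNO.two_mul_abs_inner_le j hvW) (hx.2.2 v hvL)
end

section
/- If n ≥ 3, then μ(B) < 1/2 for every nearly orthogonal basis B of every well-rounded lattice L in ℝⁿ possessing a nearly orthogonal basis. If n = 2 and L is a well-rounded lattice in ℝ² with minimal norm 1 possessing a nearly orthogonal basis B, then μ(B) = 1/2 if and only if L is isometric to the hexagonal lattice span_ℤ{(1,0), (1/2, √3/2)}, and in that case μ(B) = 1/2 holds for every nearly orthogonal basis B of L. -/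
open scoped RealInnerProductSpace
open Submodule Metric MeasureTheory

/-- The hexagonal lattice basis `{(1,0), (1/2, √3/2)}` in `ℝ²`. -/
noncomputable def hexBasis : Fin 2 → Evec 2 :=
  ![(WithLp.equiv 2 (Fin 2 → ℝ)).symm ![1, 0],
    (WithLp.equiv 2 (Fin 2 → ℝ)).symm ![1 / 2, Real.sqrt 3 / 2]]

/-!
In a π/3-orthogonal basis every pair satisfies `|⟪bᵢ, bⱼ⟫| ≤ ‖bᵢ‖ ‖bⱼ‖ / 2`, since `bᵢ` may be
listed right after `bⱼ`. If `μ(B) ≥ 1/2` these are all equalities, and then for three basis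
vectors the sum `u` of the unit vectors `±b₀/‖b₀‖`, `±b₁/‖b₁‖` has `‖u‖ ≤ √3` but
`⟪b₂, u⟫ = ‖b₂‖`, so `b₂` makes an angle smaller than π/3 with `span {b₀, b₁}`.

In the plane, `‖p b₀ + q b₁‖² ≥ ‖b₀‖ ‖b₁‖` whenever `p, q` are nonzero integers, while
well-roundedness provides a minimal vector with a nonzero coefficient on each `bᵢ`; hence both
basis vectors are minimal. For such a basis `μ(B) = 1/2` means that the Gram determinant
`‖b₀‖² ‖b₁‖² - ⟪b₀, b₁⟫²` equals `3/4`. The Gram determinant is a lattice invariant (two bases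
differ by an integer matrix of determinant `±1`), and a unit basis with `⟪b₀, ±b₁⟫ = 1/2` is the
image of the hexagonal basis under a linear isometry.
-/

open Submodule

section InnerProductSpace

variable {E F : Type*} [NormedAddCommGroup E] [InnerProductSpace ℝ E]
  [NormedAddCommGroup F] [InnerProductSpace ℝ F]

theorem exists_mem_span_pair_abs_inner_gt {x y v : E} (hx : x ≠ 0) (hy : y ≠ 0) (hv : v ≠ 0)
    (hxy : |⟪x, y⟫| ≤ ‖x‖ * ‖y‖ / 2) (hvx : ‖v‖ * ‖x‖ / 2 ≤ |⟪v, x⟫|)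
    (hvy : ‖v‖ * ‖y‖ / 2 ≤ |⟪v, y⟫|) :
    ∃ e ∈ span ℝ {x, y}, ‖v‖ * ‖e‖ / 2 < |⟪v, e⟫| := by
  have hv₀ : 0 < ‖v‖ := norm_pos_iff.mpr hv
  have unit : ∀ z : E, z ≠ 0 → ‖v‖ * ‖z‖ / 2 ≤ |⟪v, z⟫| →
      |(SignType.sign ⟪v, z⟫ : ℝ) / ‖z‖| * ‖z‖ = 1 := by
    intro z hz hvz
    have hz₀ : 0 < ‖z‖ := norm_pos_iff.mpr hz
    have : 0 < |⟪v, z⟫| := by nlinarith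
    rw [abs_div, abs_of_pos hz₀, div_mul_cancel₀ _ hz₀.ne']
    rcases lt_or_gt_of_ne (abs_pos.mp this) with h | h <;> simp [sign_neg, sign_pos, h]
  -- `s • x` and `t • y` are the unit vectors along `±x`, `±y` making acute angles with `v`
  set s : ℝ := SignType.sign ⟪v, x⟫ / ‖x‖
  set t : ℝ := SignType.sign ⟪v, y⟫ / ‖y‖
  have hs : |s| * ‖x‖ = 1 := unit x hx hvx
  have ht : |t| * ‖y‖ = 1 := unit y hy hvy
  have hinner : ‖v‖ ≤ ⟪v, s • x + t • y⟫ := by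
    have hx₀ : 0 < ‖x‖ := norm_pos_iff.mpr hx
    have hy₀ : 0 < ‖y‖ := norm_pos_iff.mpr hy
    have hsx : s * ⟪v, x⟫ = |⟪v, x⟫| / ‖x‖ := by rw [div_mul_eq_mul_div, sign_mul_self]
    have hty : t * ⟪v, y⟫ = |⟪v, y⟫| / ‖y‖ := by rw [div_mul_eq_mul_div, sign_mul_self]
    rw [inner_add_right, real_inner_smul_right, real_inner_smul_right, hsx, hty]
    have h1 : ‖v‖ / 2 ≤ |⟪v, x⟫| / ‖x‖ := by rw [le_div_iff₀ hx₀]; linarith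
    have h2 : ‖v‖ / 2 ≤ |⟪v, y⟫| / ‖y‖ := by rw [le_div_iff₀ hy₀]; linarith
    linarith
  have hnorm : ‖s • x + t • y‖ ^ 2 ≤ 3 := by
    have hcross : |s * t * ⟪x, y⟫| ≤ 1 / 2 := by
      calc |s * t * ⟪x, y⟫| = |s| * |t| * |⟪x, y⟫| := by rw [abs_mul, abs_mul]
        _ ≤ |s| * |t| * (‖x‖ * ‖y‖ / 2) := by gcongr
        _ = (|s| * ‖x‖) * (|t| * ‖y‖) / 2 := by ring
        _ = 1 / 2 := by rw [hs, ht]; norm_num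
    rw [norm_add_sq_real, norm_smul, norm_smul, real_inner_smul_left, real_inner_smul_right,
      Real.norm_eq_abs, Real.norm_eq_abs, hs, ht]
    linarith [(abs_le.mp hcross).2, show s * (t * ⟪x, y⟫) = s * t * ⟪x, y⟫ by ring]
  refine ⟨s • x + t • y, add_mem (smul_mem _ _ (subset_span (by simp)))
    (smul_mem _ _ (subset_span (by simp))), ?_⟩
  have : ‖s • x + t • y‖ < 2 := by nlinarith [norm_nonneg (s • x + t • y)]
  calc ‖v‖ * ‖s • x + t • y‖ / 2 < ‖v‖ := by nlinarith
    _ ≤ |⟪v, s • x + t • y⟫| := hinner.trans (le_abs_self _)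

theorem norm_mul_norm_le_norm_smul_add_smul_sq {x y : E} (hxy : |⟪x, y⟫| ≤ ‖x‖ * ‖y‖ / 2)
    {p q : ℝ} (hp : 1 ≤ |p|) (hq : 1 ≤ |q|) : ‖x‖ * ‖y‖ ≤ ‖p • x + q • y‖ ^ 2 := by
  have hcross : -(|p| * |q| * (‖x‖ * ‖y‖)) ≤ 2 * (p * q * ⟪x, y⟫) := by
    have := neg_abs_le (p * q * ⟪x, y⟫)
    rw [abs_mul, abs_mul] at this
    nlinarith [mul_nonneg (abs_nonneg p) (abs_nonneg q)]
  have hpq : ‖x‖ * ‖y‖ ≤ |p| * |q| * (‖x‖ * ‖y‖) :=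
    le_mul_of_one_le_left (by positivity) (by nlinarith)
  calc ‖x‖ * ‖y‖ ≤ (|p| * ‖x‖ - |q| * ‖y‖) ^ 2 + |p| * |q| * (‖x‖ * ‖y‖) := by nlinarith
    _ = p ^ 2 * ‖x‖ ^ 2 - |p| * |q| * (‖x‖ * ‖y‖) + q ^ 2 * ‖y‖ ^ 2 := by
      rw [← sq_abs p, ← sq_abs q]; ring
    _ ≤ ‖p • x + q • y‖ ^ 2 := by
      rw [norm_add_sq_real, norm_smul, norm_smul, real_inner_smul_left, real_inner_smul_right,
        Real.norm_eq_abs, Real.norm_eq_abs, mul_pow, mul_pow, sq_abs, sq_abs]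
      linarith

def gramDet (b : Fin 2 → E) : ℝ := ‖b 0‖ ^ 2 * ‖b 1‖ ^ 2 - ⟪b 0, b 1⟫ ^ 2

theorem gramDet_eq_of_eq_smul_add_smul {b w : Fin 2 → E} {p q r s : ℝ}
    (hw₀ : w 0 = p • b 0 + q • b 1) (hw₁ : w 1 = r • b 0 + s • b 1) :
    gramDet w = (p * s - q * r) ^ 2 * gramDet b := by
  simp only [gramDet, ← real_inner_self_eq_norm_sq, hw₀, hw₁, inner_add_left, inner_add_right,
    real_inner_smul_left, real_inner_smul_right, real_inner_comm (b 0) (b 1)]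
  ring

theorem LinearIsometry.gramDet_comp (f : E →ₗᵢ[ℝ] F) (b : Fin 2 → E) :
    gramDet (f ∘ b) = gramDet b := by
  simp [gramDet]

theorem linearIndependent_of_gramDet_ne_zero {b : Fin 2 → E} (h : gramDet b ≠ 0) :
    LinearIndependent ℝ b := by
  rw [← FinVec.etaExpand_eq b]
  change LinearIndependent ℝ ![b 0, b 1]
  rcases eq_or_ne (b 0) 0 with h₀ | h₀
  · simp [gramDet, h₀] at h
  refine (LinearIndependent.pair_iff' h₀).mpr fun a hb₁ => h ?_
  simp only [gramDet, ← hb₁, norm_smul,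
    real_inner_smul_right, real_inner_self_eq_norm_sq, Real.norm_eq_abs, mul_pow, sq_abs]
  ring

theorem Module.Basis.exists_linearIsometryEquiv_apply_eq {ι : Type*} (B : Basis ι ℝ E)
    (B' : Basis ι ℝ F) (h : ∀ i j, ⟪B' i, B' j⟫ = ⟪B i, B j⟫) :
    ∃ f : E ≃ₗᵢ[ℝ] F, ∀ i, f (B i) = B' i := by
  let e := B.equiv B' (Equiv.refl ι)
  have he : (innerₗ F).compl₁₂ (e : E →ₗ[ℝ] F) (e : E →ₗ[ℝ] F) = innerₗ E :=
    LinearMap.ext_basis B B fun i j => by simp [e, h]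
  exact ⟨e.isometryOfInner fun x y => congr($he x y), fun i => by simp [e]⟩

end InnerProductSpace

theorem abs_inner_le_cos_mul_of_le_subAngle {n : ℕ} {θ : ℝ} (hθ₀ : 0 ≤ θ) {v e : Evec n}
    {V : Submodule ℝ (Evec n)} (he : e ∈ V) (h : θ ≤ subAngle v V) :
    |⟪v, e⟫| ≤ Real.cos θ * ‖v‖ * ‖e‖ := by
  set p : Evec n := V.starProjection v
  have hp : ‖p‖ ≤ Real.cos θ * ‖v‖ := by
    rcases eq_or_ne v 0 with rfl | hv
    · simp [p]
    have hv₀ : 0 < ‖v‖ := norm_pos_iff.mpr hv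
    have ht₁ : ‖p‖ / ‖v‖ ≤ 1 := (div_le_one hv₀).mpr (V.norm_starProjection_apply_le v)
    have hangle : subAngle v V = Real.arccos (‖p‖ / ‖v‖) := rfl
    have hcos := Real.cos_le_cos_of_nonneg_of_le_pi hθ₀ (Real.arccos_le_pi _) (hangle ▸ h)
    rw [Real.cos_arccos (by linarith [div_nonneg (norm_nonneg p) hv₀.le]) ht₁,
      div_le_iff₀ hv₀] at hcos
    exact hcos
  calc |⟪v, e⟫| = |⟪p, e⟫| := by
        rw [V.inner_starProjection_left_eq_right, V.starProjection_eq_self_iff.mpr he]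
    _ ≤ ‖p‖ * ‖e‖ := abs_real_inner_le_norm p e
    _ ≤ Real.cos θ * ‖v‖ * ‖e‖ := by gcongr

theorem Orth.abs_inner_le_cos_mul {n : ℕ} {θ : ℝ} (hθ₀ : 0 ≤ θ) {b : Fin n → Evec n}
    (hb : Orth θ b) {i j : Fin n} (hij : i ≠ j) :
    |⟪b i, b j⟫| ≤ Real.cos θ * ‖b i‖ * ‖b j‖ := by
  have hn : 2 ≤ n := by have := Fin.val_ne_of_ne hij; omega
  let z : Fin n := ⟨0, by omega⟩
  let o : Fin n := ⟨1, by omega⟩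
  let τ := Equiv.swap z j
  have hτi : τ i ≠ z := fun h => hij (by simpa [τ] using congrArg τ h)
  let σ := τ * Equiv.swap o (τ i)
  have hσo : σ o = i := by simp [σ, τ, Equiv.swap_apply_self]
  have hσz : σ z = j := by
    simp [σ, Equiv.swap_apply_of_ne_of_ne (show z ≠ o by simp [z, o, Fin.ext_iff]) hτi.symm, τ]
  have hj : b j ∈ span ℝ ((b ∘ σ) '' {k | k < o}) :=
    subset_span ⟨z, by simp [z, o, Fin.lt_def], by simp [hσz]⟩
  simpa [hσo] using abs_inner_le_cos_mul_of_le_subAngle hθ₀ hj (hb σ o (by simp [o]))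

theorem NearlyOrth.abs_inner_le {n : ℕ} {b : Fin n → Evec n} (hb : NearlyOrth b) {i j : Fin n}
    (hij : i ≠ j) : |⟪b i, b j⟫| ≤ ‖b i‖ * ‖b j‖ / 2 := by
  have := Orth.abs_inner_le_cos_mul (by positivity) hb hij
  rwa [Real.cos_pi_div_three, one_div_mul_eq_div, div_mul_eq_mul_div] at this

theorem muB_le {n : ℕ} (b : Fin n → Evec n) {i j : Fin n} (hij : i ≠ j) :
    muB b ≤ |⟪b i, b j⟫| / (‖b i‖ * ‖b j‖) :=
  csInf_le ⟨0, by rintro _ ⟨_, _, _, rfl⟩; positivity⟩ ⟨i, j, hij, rfl⟩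

theorem NearlyOrth.muB_lt_half {n : ℕ} (hn : 3 ≤ n) {b : Fin n → Evec n}
    (hli : LinearIndependent ℝ b) (hb : NearlyOrth b) : muB b < 1 / 2 := by
  by_contra! hmu
  have hge : ∀ i j, i ≠ j → ‖b i‖ * ‖b j‖ / 2 ≤ |⟪b i, b j⟫| := by
    intro i j hij
    have := hmu.trans (muB_le b hij)
    rwa [le_div_iff₀ (mul_pos (norm_pos_iff.mpr (hli.ne_zero i))
      (norm_pos_iff.mpr (hli.ne_zero j))), one_div_mul_eq_div] at this
  let i₀ : Fin n := ⟨0, by omega⟩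
  let i₁ : Fin n := ⟨1, by omega⟩
  let i₂ : Fin n := ⟨2, by omega⟩
  have h₀₁ : i₀ ≠ i₁ := by simp [i₀, i₁, Fin.ext_iff]
  have h₂₀ : i₂ ≠ i₀ := by simp [i₂, i₀, Fin.ext_iff]
  have h₂₁ : i₂ ≠ i₁ := by simp [i₂, i₁, Fin.ext_iff]
  obtain ⟨e, he, hlt⟩ := exists_mem_span_pair_abs_inner_gt (hli.ne_zero i₀) (hli.ne_zero i₁)
    (hli.ne_zero i₂) (hb.abs_inner_le h₀₁) (hge _ _ h₂₀) (hge _ _ h₂₁)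
  have he' : e ∈ span ℝ ((b ∘ ⇑(1 : Equiv.Perm (Fin n))) '' {k | k < i₂}) := by
    refine span_mono ?_ he
    rintro _ (rfl | rfl)
    exacts [⟨i₀, by simp [i₀, i₂, Fin.lt_def], rfl⟩, ⟨i₁, by simp [i₁, i₂, Fin.lt_def], rfl⟩]
  have := abs_inner_le_cos_mul_of_le_subAngle (by positivity) he' (hb 1 i₂ (by simp [i₂]))
  rw [Real.cos_pi_div_three] at this
  simp only [Equiv.Perm.coe_one, Function.comp_id] at this
  linarith

theorem apply_mem_latticeOf {n : ℕ} (b : Fin n → Evec n) (i : Fin n) : b i ∈ latticeOf b :=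
  ⟨Pi.single i 1, by simp [Pi.single_apply]⟩

theorem image_latticeOf {n : ℕ} {G : Type*} [FunLike G (Evec n) (Evec n)]
    [LinearMapClass G ℝ (Evec n) (Evec n)] (f : G) (b : Fin n → Evec n) :
    f '' latticeOf b = latticeOf (f ∘ b) := by
  ext x
  constructor
  · rintro ⟨_, ⟨c, rfl⟩, rfl⟩
    exact ⟨c, by simp [map_sum, map_smul]⟩
  · rintro ⟨c, rfl⟩
    exact ⟨_, ⟨c, rfl⟩, by simp [map_sum, map_smul]⟩

theorem latticeOf_neg_snd (b : Fin 2 → Evec 2) : latticeOf ![b 0, -b 1] = latticeOf b := by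
  ext x
  constructor
  · rintro ⟨c, rfl⟩
    exact ⟨![c 0, -c 1], by simp [Fin.sum_univ_two]⟩
  · rintro ⟨c, rfl⟩
    exact ⟨![c 0, -c 1], by simp [Fin.sum_univ_two]⟩

theorem norm_eq_of_mem_minVecs {n : ℕ} {L : Set (Evec n)} {m : ℝ} (hL : hasMinNorm L m)
    {x : Evec n} (hx : x ∈ minVecs L) : ‖x‖ = m := by
  obtain ⟨⟨y, hyL, hy₀, rfl⟩, hmin⟩ := hL
  exact le_antisymm (hx.2.2 y hyL hy₀) (hmin x hx.1 hx.2.1)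

theorem IsWellRounded.exists_coeff_ne_zero {n : ℕ} {b : Fin n → Evec n}
    (hli : LinearIndependent ℝ b) (hwr : IsWellRounded (latticeOf b)) (i : Fin n) :
    ∃ c : Fin n → ℤ, ∑ k, (c k : ℝ) • b k ∈ minVecs (latticeOf b) ∧ c i ≠ 0 := by
  by_contra! h
  have hsub : minVecs (latticeOf b) ⊆ span ℝ (b '' {i}ᶜ) := by
    rintro _ hx
    obtain ⟨c, rfl⟩ := hx.1
    refine sum_mem fun k _ => ?_
    rcases eq_or_ne k i with rfl | hk
    · simp [h c hx]
    · exact smul_mem _ _ (subset_span ⟨k, hk, rfl⟩)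
  have hspan : ⊤ ≤ span ℝ (b '' {i}ᶜ) := hwr ▸ span_le.mpr hsub
  exact hli.notMem_span_image (x := i) (s := {i}ᶜ) (by simp) (hspan mem_top)

theorem NearlyOrth.norm_eq_one {b : Fin 2 → Evec 2} (hli : LinearIndependent ℝ b)
    (hwr : IsWellRounded (latticeOf b)) (hmin : hasMinNorm (latticeOf b) 1) (hb : NearlyOrth b)
    (i : Fin 2) : ‖b i‖ = 1 := by
  have hge : ∀ k, 1 ≤ ‖b k‖ := fun k =>
    hmin.2 _ (apply_mem_latticeOf b k) (hli.ne_zero k)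
  have one_le : ∀ {c : ℤ}, c ≠ 0 → (1 : ℝ) ≤ |(c : ℝ)| := fun hc => mod_cast Int.one_le_abs hc
  refine le_antisymm ?_ (hge i)
  obtain ⟨c, hx, hci⟩ := hwr.exists_coeff_ne_zero hli i
  have hx₁ := norm_eq_of_mem_minVecs hmin hx
  by_cases hsingle : ∀ k, k ≠ i → c k = 0
  · rw [Finset.sum_eq_single i (fun k _ hk => by simp [hsingle k hk]) (by simp), norm_smul,
      Real.norm_eq_abs] at hx₁
    nlinarith [one_le hci, norm_nonneg (b i)]
  · push Not at hsingle
    obtain ⟨k, hki, hck⟩ := hsingle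
    have hsum : ∑ l, (c l : ℝ) • b l = (c i : ℝ) • b i + (c k : ℝ) • b k := by
      fin_cases i <;> fin_cases k <;> simp_all [Fin.sum_univ_two, add_comm]
    have := norm_mul_norm_le_norm_smul_add_smul_sq (hb.abs_inner_le hki.symm) (one_le hci)
      (one_le hck)
    rw [← hsum, hx₁] at this
    nlinarith [hge i, hge k]

theorem gramDet_eq_of_latticeOf_eq {b w : Fin 2 → Evec 2} (h : latticeOf b = latticeOf w)
    (hb : gramDet b ≠ 0) : gramDet w = gramDet b := by
  have unimodular : ∀ {u v : Fin 2 → Evec 2}, latticeOf u = latticeOf v →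
      ∃ d : ℤ, gramDet v = (d : ℝ) ^ 2 * gramDet u := by
    intro u v huv
    obtain ⟨c, hc⟩ : v 0 ∈ latticeOf u := huv ▸ apply_mem_latticeOf v 0
    obtain ⟨c', hc'⟩ : v 1 ∈ latticeOf u := huv ▸ apply_mem_latticeOf v 1
    rw [Fin.sum_univ_two] at hc hc'
    exact ⟨c 0 * c' 1 - c 1 * c' 0, by push_cast; exact gramDet_eq_of_eq_smul_add_smul hc hc'⟩
  obtain ⟨d, hd⟩ := unimodular h
  obtain ⟨d', hd'⟩ := unimodular h.symm
  have hdd' : d ^ 2 * d' ^ 2 = 1 := by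
    have : ((d ^ 2 * d' ^ 2 : ℤ) : ℝ) * gramDet b = 1 * gramDet b := by
      rw [hd] at hd'
      push_cast
      linear_combination -hd'
    exact_mod_cast mul_right_cancel₀ hb this
  have hd₁ : (d : ℝ) ^ 2 = 1 := mod_cast Int.eq_one_of_mul_eq_one_right (sq_nonneg d) hdd'
  rw [hd, hd₁, one_mul]

theorem muB_fin_two (b : Fin 2 → Evec 2) : muB b = |⟪b 0, b 1⟫| / (‖b 0‖ * ‖b 1‖) := by
  refine le_antisymm (muB_le b zero_ne_one) (le_csInf ⟨_, 0, 1, zero_ne_one, rfl⟩ ?_)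
  rintro _ ⟨i, j, hij, rfl⟩
  fin_cases i <;> fin_cases j <;> simp_all [real_inner_comm, mul_comm]

theorem muB_eq_half_iff_gramDet {b : Fin 2 → Evec 2} (hunit : ∀ i, ‖b i‖ = 1) :
    muB b = 1 / 2 ↔ gramDet b = 3 / 4 := by
  rw [muB_fin_two, gramDet, hunit, hunit, mul_one, div_one, one_pow, one_mul,
    show (3 / 4 : ℝ) = 1 - (1 / 2) ^ 2 by norm_num, sub_right_inj, ← sq_abs,
    sq_eq_sq₀ (abs_nonneg _) (by norm_num)]

theorem inner_hexBasis (i j : Fin 2) :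
    ⟪hexBasis i, hexBasis j⟫ = if i = j then 1 else 1 / 2 := by
  fin_cases i <;> fin_cases j <;>
    simp [-inner_self_eq_norm_sq_to_K, hexBasis, PiLp.inner_apply, Fin.sum_univ_two]
  norm_num [div_mul_div_comm]

theorem gramDet_hexBasis : gramDet hexBasis = 3 / 4 := by
  simp only [gramDet, ← real_inner_self_eq_norm_sq, inner_hexBasis]
  norm_num

theorem exists_linearIsometryEquiv_comp_hexBasis {x y : Evec 2} (hx : ‖x‖ = 1) (hy : ‖y‖ = 1)
    (hxy : ⟪x, y⟫ = 1 / 2) : ∃ f : Evec 2 ≃ₗᵢ[ℝ] Evec 2, ⇑f ∘ hexBasis = ![x, y] := by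
  have hcard : Fintype.card (Fin 2) = Module.finrank ℝ (Evec 2) := by simp
  have hG : gramDet ![x, y] = 3 / 4 := by simp [gramDet, hx, hy, hxy]; norm_num
  let B := basisOfLinearIndependentOfCardEqFinrank
    (linearIndependent_of_gramDet_ne_zero (by rw [gramDet_hexBasis]; norm_num)) hcard
  let B' := basisOfLinearIndependentOfCardEqFinrank
    (linearIndependent_of_gramDet_ne_zero (by rw [hG]; norm_num)) hcard
  obtain ⟨f, hf⟩ := B.exists_linearIsometryEquiv_apply_eq B' fun i j => by
    simp only [B, B', coe_basisOfLinearIndependentOfCardEqFinrank, inner_hexBasis]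
    fin_cases i <;> fin_cases j <;> simp [hx, hy, hxy, real_inner_comm x]
  exact ⟨f, funext fun i => by simpa [B, B'] using hf i⟩

theorem exists_latticeOf_eq_image_hexBasis {b : Fin 2 → Evec 2} (hunit : ∀ i, ‖b i‖ = 1)
    (hG : gramDet b = 3 / 4) :
    ∃ f : Evec 2 ≃ₗᵢ[ℝ] Evec 2, latticeOf b = f '' latticeOf hexBasis := by
  rw [gramDet, hunit, hunit] at hG
  rcases sq_eq_sq_iff_eq_or_eq_neg.mp (show ⟪b 0, b 1⟫ ^ 2 = (1 / 2) ^ 2 by linarith) with hc | hc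
  · obtain ⟨f, hf⟩ := exists_linearIsometryEquiv_comp_hexBasis (hunit 0) (hunit 1) hc
    refine ⟨f, ?_⟩
    rw [image_latticeOf, hf, ← FinVec.etaExpand_eq b]
    rfl
  · obtain ⟨f, hf⟩ := exists_linearIsometryEquiv_comp_hexBasis (hunit 0)
      (by rw [norm_neg, hunit 1]) (by rw [inner_neg_right, hc, neg_neg])
    exact ⟨f, by rw [image_latticeOf, hf, latticeOf_neg_snd]⟩

/-- for `n ≥ 3`, `μ(B) < 1/2` for every nearly orthogonal basis of a
well-rounded lattice; for `n = 2`, `μ(B) = 1/2` iff the lattice is (isometric to)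
the hexagonal lattice, in which case it holds for every nearly orthogonal basis. -/
theorem stmt_6 :
    (∀ n : ℕ, 3 ≤ n → ∀ b : Fin n → Evec n, LinearIndependent ℝ b →
      IsWellRounded (latticeOf b) → NearlyOrth b → muB b < 1 / 2) ∧
    (∀ b : Fin 2 → Evec 2, LinearIndependent ℝ b →
      IsWellRounded (latticeOf b) → hasMinNorm (latticeOf b) 1 → NearlyOrth b →
      ((muB b = 1 / 2 ↔
          ∃ f : Evec 2 ≃ₗᵢ[ℝ] Evec 2, latticeOf b = f '' latticeOf hexBasis) ∧
       (muB b = 1 / 2 → ∀ b' : Fin 2 → Evec 2, LinearIndependent ℝ b' →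
          latticeOf b' = latticeOf b → NearlyOrth b' → muB b' = 1 / 2))) := by
  refine ⟨fun n hn b hli _ hb => hb.muB_lt_half hn hli, fun b hli hwr hmin hb => ?_⟩
  have hunit := hb.norm_eq_one hli hwr hmin
  rw [muB_eq_half_iff_gramDet hunit]
  refine ⟨⟨exists_latticeOf_eq_image_hexBasis hunit, ?_⟩, ?_⟩
  · rintro ⟨f, hf⟩
    have hhex : gramDet (f ∘ hexBasis) = 3 / 4 :=
      (f.toLinearIsometry.gramDet_comp hexBasis).trans gramDet_hexBasis
    rw [image_latticeOf] at hf
    rw [← hhex]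
    exact gramDet_eq_of_latticeOf_eq hf.symm (by rw [hhex]; norm_num)
  · intro hG b' hli' hlat hb'
    rw [muB_eq_half_iff_gramDet (hb'.norm_eq_one hli' (hlat ▸ hwr) (hlat ▸ hmin)), ← hG]
    exact gramDet_eq_of_latticeOf_eq hlat.symm (by rw [hG]; norm_num)
end

section
/- For every n ≥ 3 and every integer m ≥ 1 satisfying m ≤ (n−2)/2 if n is even and m ≤ (n−1)/2 if n is odd, there exists a well-rounded lattice L in ℝⁿ possessing a weakly nearly orthogonal basis such that |S(L)| = 3n + 2m if n is even and |S(L)| = 3n − 1 + 2m if n is odd. Consequently, every even number between 3n and 4n − 2 (inclusive) occurs as |S(L)| for some such lattice. -/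
open scoped RealInnerProductSpace
open Submodule Metric MeasureTheory

/-!
Take unit vectors `b 0, …, b (n - 1)` such that `b 0, …, b ℓ` is a chain in which each vector
makes angle `π/3` with its predecessor and has Gram–Schmidt residual `b j - b (j - 1) / 2`,
while every later `b r` is orthogonal to all earlier vectors. The projection of `b r` onto the
span of its predecessors is then `b (r - 1) / 2` or `0`, so the basis is weakly nearly orthogonal.

For the minimal vectors, add `a • b r` to an integer combination `u` of the earlier vectors.
In the chain, `‖u + a b r‖² = ‖u‖² + a ⟪u, b (r - 1)⟫ + a²`, which by Cauchy–Schwarz is at least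
`1` once `‖u‖ ≥ 1`, with equality only if `a = ±1` and `u = ∓ b (r - 1)`; past the chain it is
`‖u‖² + a² ≥ 2`. By induction on `r` the minimal norm is `1` and the minimal vectors are
exactly `±b i` and `±(b (j + 1) - b j)` for `j < ℓ`, that is `2n + 2ℓ` vectors, and they
include the basis. Taking `ℓ` from `⌊n/2⌋` to `n - 1` gives every even count from `3n`
to `4n - 2`.
-/

noncomputable section

open Set

lemma image_Iio_succ {α : Type*} (f : ℕ → α) (r : ℕ) :
    f '' Iio (r + 1) = insert (f r) (f '' Iio r) := by
  rw [← image_insert_eq, ← Order.succ_eq_add_one, Order.Iio_succ_eq_insert]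

section Coefficients

def chainCoeffs (ℓ N : ℕ) : Set (ℕ →₀ ℝ) :=
  (fun i => Finsupp.single i 1) '' Iio N ∪
    (fun j => Finsupp.single (j + 1) 1 - Finsupp.single j 1) '' Iio ℓ

lemma finite_chainCoeffs (ℓ N : ℕ) : (chainCoeffs ℓ N).Finite :=
  ((finite_Iio N).image _).union ((finite_Iio ℓ).image _)

lemma chainCoeffs_subset_supported {ℓ N : ℕ} (hℓ : ℓ < N) :
    chainCoeffs ℓ N ⊆ Finsupp.supported ℝ ℝ (Iio N) := by
  rintro _ (⟨i, hi, rfl⟩ | ⟨j, hj, rfl⟩)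
  · exact Finsupp.single_mem_supported ℝ _ hi
  · simp only [mem_Iio] at hj
    exact sub_mem (Finsupp.single_mem_supported ℝ _ (show j + 1 < N by omega))
      (Finsupp.single_mem_supported ℝ _ (show j < N by omega))

abbrev moment (f : ℕ → ℝ) : (ℕ →₀ ℝ) →ₗ[ℝ] ℝ := Finsupp.linearCombination ℝ f

lemma ncard_chainCoeffs (ℓ N : ℕ) : (chainCoeffs ℓ N).ncard = N + ℓ := by
  -- The total mass is `1` on the singles and `0` on the differences, and the `i ↦ i ^ 2`
  -- moment of the `j`-th difference is `2 * j + 1`.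
  rw [chainCoeffs, ncard_union_eq, InjOn.ncard_image, InjOn.ncard_image, ncard_Iio_nat,
    ncard_Iio_nat]
  · intro j _ j' _ h
    have := congrArg (moment fun i => (i : ℝ) ^ 2) h
    simp only [map_sub, Finsupp.linearCombination_single, smul_eq_mul] at this
    push_cast at this
    exact_mod_cast (by linarith : (j : ℝ) = j')
  · exact (Finsupp.single_left_injective one_ne_zero).injOn
  · rw [disjoint_left]
    rintro _ ⟨i, -, rfl⟩ ⟨j, -, h⟩
    have := congrArg (moment fun _ => 1) h
    simp only [map_sub, Finsupp.linearCombination_single, smul_eq_mul] at this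
    norm_num at this

lemma ncard_chainCoeffs_union_neg (ℓ N : ℕ) :
    (chainCoeffs ℓ N ∪ -chainCoeffs ℓ N).ncard = 2 * N + 2 * ℓ := by
  have hpos : ∀ c ∈ chainCoeffs ℓ N, 0 < moment (fun i => (i : ℝ) + 1) c := by
    rintro _ (⟨i, -, rfl⟩ | ⟨j, -, rfl⟩) <;>
      simp only [map_sub, Finsupp.linearCombination_single, smul_eq_mul] <;> push_cast <;> linarith
  have hfin := finite_chainCoeffs ℓ N
  rw [ncard_union_eq ?_ hfin hfin.neg, ncard_neg, ncard_chainCoeffs]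
  · ring
  · rw [disjoint_left]
    intro c hc hc'
    have := hpos _ hc'
    rw [map_neg] at this
    linarith [hpos c hc]

end Coefficients

section AddCommGroup

variable {E : Type*} [AddCommGroup E]

def chainVecs (g : ℕ → E) (ℓ N : ℕ) : Set E :=
  g '' Iio N ∪ (fun j => g (j + 1) - g j) '' Iio ℓ

def chainMinVecs (g : ℕ → E) (ℓ N : ℕ) : Set E :=
  chainVecs g ℓ N ∪ -chainVecs g ℓ N

lemma chainMinVecs_subset_span (g : ℕ → E) {ℓ N : ℕ} (hℓ : ℓ < N) :
    chainMinVecs g ℓ N ⊆ span ℤ (g '' Iio N) := by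
  have hS : chainVecs g ℓ N ⊆ span ℤ (g '' Iio N) := by
    rintro _ (⟨i, hi, rfl⟩ | ⟨j, hj, rfl⟩)
    · exact subset_span ⟨i, hi, rfl⟩
    · simp only [mem_Iio] at hj
      exact sub_mem (subset_span ⟨j + 1, mem_Iio.mpr (by omega), rfl⟩)
        (subset_span ⟨j, mem_Iio.mpr (by omega), rfl⟩)
  exact union_subset hS fun x hx => by simpa using neg_mem (hS hx)

end AddCommGroup

section Module

variable {E : Type*} [AddCommGroup E] [Module ℝ E]

lemma chainVecs_eq_image (g : ℕ → E) (ℓ N : ℕ) :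
    chainVecs g ℓ N = Finsupp.linearCombination ℝ g '' chainCoeffs ℓ N := by
  simp [chainVecs, chainCoeffs, image_union, image_image, Finsupp.linearCombination_single]

lemma ncard_chainMinVecs {g : ℕ → E} {ℓ N : ℕ} (hg : LinearIndepOn ℝ g (Iio N)) (hℓ : ℓ < N) :
    (chainMinVecs g ℓ N).ncard = 2 * N + 2 * ℓ := by
  have hC := chainCoeffs_subset_supported hℓ
  have hsupp : chainCoeffs ℓ N ∪ -chainCoeffs ℓ N ⊆ Finsupp.supported ℝ ℝ (Iio N) :=
    union_subset hC fun c hc => by simpa using neg_mem (hC hc)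
  rw [chainMinVecs, chainVecs_eq_image, ← image_neg, ← image_union, InjOn.ncard_image,
    ncard_chainCoeffs_union_neg]
  exact fun c hc c' hc' => linearIndepOn_iffₛ.mp hg c (hsupp hc) c' (hsupp hc')

end Module

section InnerProductSpace

variable {E : Type*} [NormedAddCommGroup E] [InnerProductSpace ℝ E]

lemma norm_add_smul_sq_of_norm_eq_one (u : E) {w : E} (hw : ‖w‖ = 1) (a : ℝ) :
    ‖u + a • w‖ ^ 2 = ‖u‖ ^ 2 + 2 * a * ⟪u, w⟫ + a ^ 2 := by
  rw [norm_add_sq_real, norm_smul, real_inner_smul_right, hw, Real.norm_eq_abs, mul_one, sq_abs]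
  ring

lemma one_lt_norm_add_smul_of_inner_eq_zero {u w : E} (hu : 1 ≤ ‖u‖) (hw : ‖w‖ = 1)
    (huw : ⟪u, w⟫ = 0) {a : ℝ} (ha : 1 ≤ |a|) : 1 < ‖u + a • w‖ := by
  have h := norm_add_smul_sq_of_norm_eq_one u hw a
  rw [huw, ← sq_abs a] at h
  nlinarith [norm_nonneg (u + a • w)]

lemma one_lt_norm_add_smul_of_abs_inner_le {u w : E} (hw : ‖w‖ = 1) (huw : |⟪u, w⟫| ≤ ‖u‖ / 2)
    {a : ℝ} (ha : 2 ≤ |a|) : 1 < ‖u + a • w‖ := by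
  have h := norm_add_smul_sq_of_norm_eq_one u hw a
  have hlow : -(|a| * ‖u‖) ≤ 2 * a * ⟪u, w⟫ := by
    have := neg_abs_le (a * ⟪u, w⟫)
    rw [abs_mul] at this
    nlinarith [abs_nonneg a]
  rw [← sq_abs a] at h
  nlinarith [norm_nonneg (u + a • w), sq_nonneg (‖u‖ - |a| / 2)]

lemma one_le_norm_add_smul_of_inner_eq_half {u v w : E} (hu : 1 ≤ ‖u‖) (hv : ‖v‖ = 1)
    (hw : ‖w‖ = 1) (huw : ⟪u, w⟫ = ⟪u, v⟫ / 2) {ε : ℝ} (hε : ε ^ 2 = 1) :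
    1 ≤ ‖u + ε • w‖ ∧ (‖u + ε • w‖ = 1 → u = -(ε • v)) := by
  have hε1 : |ε| = 1 := by nlinarith [sq_abs ε, abs_nonneg ε]
  have hs : -‖u‖ ≤ ε * ⟪u, v⟫ := by
    have h1 := abs_real_inner_le_norm u v
    rw [hv, mul_one] at h1
    have h2 := neg_abs_le (ε * ⟪u, v⟫)
    rw [abs_mul, hε1, one_mul] at h2
    linarith
  have hsq : ‖u + ε • w‖ ^ 2 = ‖u‖ ^ 2 + ε * ⟪u, v⟫ + 1 := by
    rw [norm_add_smul_sq_of_norm_eq_one u hw ε, huw, hε]; ring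
  refine ⟨by nlinarith [norm_nonneg (u + ε • w)], fun h1 => ?_⟩
  rw [h1] at hsq
  have hu1 : ‖u‖ = 1 := by nlinarith
  have hzero : ‖u + ε • v‖ ^ 2 = 0 := by
    rw [norm_add_smul_sq_of_norm_eq_one u hv ε, hu1, hε]; nlinarith
  exact eq_neg_of_add_eq_zero_left (norm_eq_zero.mp (pow_eq_zero_iff two_ne_zero |>.mp hzero))

lemma mem_orthogonal_span_of_inner_eq_zero {s : Set E} {x : E} (h : ∀ y ∈ s, ⟪y, x⟫ = 0) :
    x ∈ (span ℝ s)ᗮ :=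
  (isOrtho_span.mpr fun _ hu _ hv => by
    rw [mem_singleton_iff.mp hu, real_inner_comm]
    exact h _ hv).le (subset_span (mem_singleton x))

structure IsHalvingChain (g : ℕ → E) (ℓ N : ℕ) : Prop where
  norm_eq_one : ∀ i < N, ‖g i‖ = 1
  sub_half_mem_orthogonal : ∀ j < ℓ, j + 1 < N →
    g (j + 1) - (2⁻¹ : ℝ) • g j ∈ (span ℝ (g '' Iio (j + 1)))ᗮ
  mem_orthogonal : ∀ r < N, ℓ < r → g r ∈ (span ℝ (g '' Iio r))ᗮ

namespace IsHalvingChain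

variable {g : ℕ → E} {ℓ N : ℕ}

lemma inner_succ (hg : IsHalvingChain g ℓ N) {j : ℕ} (hj : j < ℓ) (hjN : j + 1 < N) {u : E}
    (hu : u ∈ span ℝ (g '' Iio (j + 1))) : ⟪u, g (j + 1)⟫ = ⟪u, g j⟫ / 2 := by
  have h := inner_right_of_mem_orthogonal hu (hg.sub_half_mem_orthogonal j hj hjN)
  rw [inner_sub_right, real_inner_smul_right] at h
  linarith

lemma inner_eq_zero (hg : IsHalvingChain g ℓ N) {r : ℕ} (hr : r < N) (hℓr : ℓ < r) {u : E}
    (hu : u ∈ span ℝ (g '' Iio r)) : ⟪u, g r⟫ = 0 :=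
  inner_right_of_mem_orthogonal hu (hg.mem_orthogonal r hr hℓr)

lemma norm_sub_eq_one (hg : IsHalvingChain g ℓ N) {j : ℕ} (hj : j < ℓ) (hjN : j + 1 < N) :
    ‖g (j + 1) - g j‖ = 1 := by
  have hinner := hg.inner_succ hj hjN (subset_span ⟨j, Nat.lt_succ_self j, rfl⟩)
  rw [real_inner_self_eq_norm_sq, hg.norm_eq_one j (by omega)] at hinner
  have hsq : ‖g (j + 1) - g j‖ ^ 2 = 1 := by
    rw [norm_sub_sq_real, real_inner_comm, hinner, hg.norm_eq_one j (by omega),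
      hg.norm_eq_one (j + 1) hjN]
    norm_num
  nlinarith [norm_nonneg (g (j + 1) - g j)]

lemma norm_eq_one_of_mem_chainMinVecs (hg : IsHalvingChain g ℓ N) (hℓ : ℓ < N) {x : E}
    (hx : x ∈ chainMinVecs g ℓ N) : ‖x‖ = 1 := by
  have hS : ∀ y ∈ chainVecs g ℓ N, ‖y‖ = 1 := by
    rintro _ (⟨i, hi, rfl⟩ | ⟨j, hj, rfl⟩)
    · exact hg.norm_eq_one i hi
    · simp only [mem_Iio] at hj
      exact hg.norm_sub_eq_one hj (by omega)
  rcases hx with hx | hx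
  · exact hS x hx
  · simpa using hS _ hx

lemma exists_orthogonal_decomposition (hg : IsHalvingChain g ℓ N) {r : ℕ} (hr : r < N) :
    ∃ p ∈ span ℝ (g '' Iio r), g r - p ∈ (span ℝ (g '' Iio r))ᗮ ∧ ‖p‖ ≤ 2⁻¹ := by
  rcases r with _ | j
  · exact ⟨0, zero_mem _, by simp, by norm_num⟩
  by_cases hj : j < ℓ
  · refine ⟨(2⁻¹ : ℝ) • g j, smul_mem _ _ (subset_span ⟨j, Nat.lt_succ_self j, rfl⟩),
      hg.sub_half_mem_orthogonal j hj hr, ?_⟩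
    rw [norm_smul, hg.norm_eq_one j (by omega)]
    norm_num
  · exact ⟨0, zero_mem _, by simpa using hg.mem_orthogonal (j + 1) hr (by omega), by simp⟩

lemma norm_starProjection_le (hg : IsHalvingChain g ℓ N) {r : ℕ} (hr : r < N)
    [(span ℝ (g '' Iio r)).HasOrthogonalProjection] :
    ‖(span ℝ (g '' Iio r)).starProjection (g r)‖ ≤ 2⁻¹ := by
  obtain ⟨p, hp, hgp, hp2⟩ := hg.exists_orthogonal_decomposition hr
  rwa [Submodule.eq_starProjection_of_mem_of_inner_eq_zero hp
    (fun w hw => inner_left_of_mem_orthogonal hw hgp)]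

lemma notMem_span (hg : IsHalvingChain g ℓ N) {r : ℕ} (hr : r < N) :
    g r ∉ span ℝ (g '' Iio r) := by
  intro hmem
  obtain ⟨p, hp, hgp, hp2⟩ := hg.exists_orthogonal_decomposition hr
  have h0 : g r - p = 0 :=
    inner_self_eq_zero.mp (inner_right_of_mem_orthogonal (sub_mem hmem hp) hgp)
  have := hg.norm_eq_one r hr
  rw [sub_eq_zero.mp h0] at this
  norm_num [this] at hp2

lemma linearIndepOn (hg : IsHalvingChain g ℓ N) : LinearIndepOn ℝ g (Iio N) := by
  suffices ∀ r ≤ N, LinearIndepOn ℝ g (Iio r) from this N le_rfl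
  intro r hr
  induction r with
  | zero => simp
  | succ r ih =>
    rw [← Order.succ_eq_add_one, Order.Iio_succ_eq_insert,
      linearIndepOn_insert (show r ∉ Iio r from lt_irrefl r)]
    exact ⟨ih (by omega), hg.notMem_span hr⟩

lemma one_le_norm_add_smul_of_mem_span (hg : IsHalvingChain g ℓ N) {r : ℕ} (hr : r < N) {u : E}
    (hu : u ∈ span ℝ (g '' Iio r)) (hu1 : 1 ≤ ‖u‖) {a : ℤ} (ha : a ≠ 0) :
    1 ≤ ‖u + (a : ℝ) • g r‖ ∧
      (‖u + (a : ℝ) • g r‖ = 1 → u + (a : ℝ) • g r ∈ chainMinVecs g ℓ N) := by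
  have hgr := hg.norm_eq_one r hr
  by_cases hℓr : ℓ < r
  · have h := one_lt_norm_add_smul_of_inner_eq_zero hu1 hgr (hg.inner_eq_zero hr hℓr hu)
      (a := a) (by rw [← Int.cast_abs]; exact_mod_cast Int.one_le_abs ha)
    exact ⟨h.le, fun h1 => absurd h1 h.ne'⟩
  have hr0 : r ≠ 0 := by
    rintro rfl
    norm_num [show u = 0 by simpa using hu] at hu1
  obtain ⟨j, rfl⟩ := Nat.exists_eq_add_one_of_ne_zero hr0
  have hj : j < ℓ := by omega
  have hgj := hg.norm_eq_one j (by omega)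
  have huw := hg.inner_succ hj hr hu
  have hD : g (j + 1) - g j ∈ chainVecs g ℓ N := Or.inr ⟨j, hj, rfl⟩
  have hsign : ∀ ε : ℝ, ε ^ 2 = 1 → ε • (g (j + 1) - g j) ∈ chainMinVecs g ℓ N →
      1 ≤ ‖u + ε • g (j + 1)‖ ∧
        (‖u + ε • g (j + 1)‖ = 1 → u + ε • g (j + 1) ∈ chainMinVecs g ℓ N) := by
    intro ε hε hmem
    refine (one_le_norm_add_smul_of_inner_eq_half hu1 hgj hgr huw hε).imp_right fun h h1 => ?_
    rwa [h h1, neg_add_eq_sub, ← smul_sub]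
  rcases (show a = 1 ∨ a = -1 ∨ 2 ≤ |a| by
    rcases abs_cases a with ⟨h, _⟩ | ⟨h, _⟩ <;> rw [h] <;> omega)
    with rfl | rfl | ha2
  · push_cast
    exact hsign 1 (by norm_num) (by rw [one_smul]; exact Or.inl hD)
  · push_cast
    exact hsign (-1) (by norm_num) (by rw [neg_one_smul]; exact Or.inr (neg_mem_neg.mpr hD))
  · have habs : |⟪u, g (j + 1)⟫| ≤ ‖u‖ / 2 := by
      rw [huw, abs_div, abs_two]
      have := abs_real_inner_le_norm u (g j)
      rw [hgj, mul_one] at this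
      linarith
    have h := one_lt_norm_add_smul_of_abs_inner_le hgr habs (a := a)
      (by rw [← Int.cast_abs]; exact_mod_cast ha2)
    exact ⟨h.le, fun h1 => absurd h1 h.ne'⟩

theorem one_le_norm_of_mem_span (hg : IsHalvingChain g ℓ N) {r : ℕ} (hr : r ≤ N) {v : E}
    (hv : v ∈ span ℤ (g '' Iio r)) (hv0 : v ≠ 0) :
    1 ≤ ‖v‖ ∧ (‖v‖ = 1 → v ∈ chainMinVecs g ℓ N) := by
  induction r generalizing v with
  | zero => simp_all
  | succ r ih =>
    rw [image_Iio_succ, mem_span_insert] at hv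
    obtain ⟨a, u, hu, rfl⟩ := hv
    rw [← Int.cast_smul_eq_zsmul ℝ, add_comm]
    by_cases hu0 : u = 0
    · subst hu0
      have ha : a ≠ 0 := by rintro rfl; simp at hv0
      rw [zero_add, norm_smul, hg.norm_eq_one r hr, mul_one, Real.norm_eq_abs, ← Int.cast_abs]
      refine ⟨by exact_mod_cast Int.one_le_abs ha, fun h1 => ?_⟩
      have hgr : g r ∈ chainVecs g ℓ N := Or.inl ⟨r, hr, rfl⟩
      rcases abs_eq (zero_le_one' ℤ) |>.mp (by exact_mod_cast h1) with rfl | rfl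
      · rw [Int.cast_one, one_smul]
        exact Or.inl hgr
      · rw [Int.cast_neg, Int.cast_one, neg_one_smul]
        exact Or.inr (neg_mem_neg.mpr hgr)
    obtain ⟨hu1, huM⟩ := ih (by omega) hu hu0
    by_cases ha : a = 0
    · simpa [ha] using And.intro hu1 huM
    exact hg.one_le_norm_add_smul_of_mem_span hr (span_le_restrictScalars ℤ ℝ _ hu) hu1 ha

end IsHalvingChain

def halvingChain (e : ℕ → E) (ℓ : ℕ) : ℕ → E
  | 0 => e 0
  | j + 1 => if j < ℓ then (2⁻¹ : ℝ) • halvingChain e ℓ j + (√3 / 2) • e (j + 1) else e (j + 1)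

variable {e : ℕ → E} {ℓ N : ℕ}

lemma inner_halvingChain_eq_zero (he : ∀ i < N, ∀ k < N, ⟪e i, e k⟫ = if i = k then 1 else 0)
    {i k : ℕ} (hik : i < k) (hk : k < N) : ⟪halvingChain e ℓ i, e k⟫ = 0 := by
  induction i with
  | zero => simpa [halvingChain, hik.ne] using he 0 (by omega) k hk
  | succ j ih =>
    have hek : ⟪e (j + 1), e k⟫ = 0 := by simpa [hik.ne] using he (j + 1) (by omega) k hk
    simp only [halvingChain]
    split_ifs
    · rw [inner_add_left, real_inner_smul_left, real_inner_smul_left, ih (by omega), hek]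
      ring
    · exact hek

lemma norm_halvingChain (he : ∀ i < N, ∀ k < N, ⟪e i, e k⟫ = if i = k then 1 else 0)
    {i : ℕ} (hi : i < N) : ‖halvingChain e ℓ i‖ = 1 := by
  have hnorm : ∀ k < N, ‖e k‖ = 1 := fun k hk => by
    have := he k hk k hk
    rw [if_pos rfl, real_inner_self_eq_norm_sq] at this
    nlinarith [norm_nonneg (e k)]
  induction i with
  | zero => exact hnorm 0 hi
  | succ j ih =>
    simp only [halvingChain]
    split_ifs
    · have hsq : ‖(2⁻¹ : ℝ) • halvingChain e ℓ j + (√3 / 2) • e (j + 1)‖ ^ 2 = 1 := by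
        rw [norm_add_sq_real, real_inner_smul_left, real_inner_smul_right,
          inner_halvingChain_eq_zero he (Nat.lt_succ_self j) hi, norm_smul, norm_smul,
          ih (by omega), hnorm _ hi]
        norm_num [abs_of_pos, div_pow]
      nlinarith [norm_nonneg ((2⁻¹ : ℝ) • halvingChain e ℓ j + (√3 / 2) • e (j + 1))]
    · exact hnorm _ hi

lemma isHalvingChain_halvingChain
    (he : ∀ i < N, ∀ k < N, ⟪e i, e k⟫ = if i = k then 1 else 0) :
    IsHalvingChain (halvingChain e ℓ) ℓ N where
  norm_eq_one _ hi := norm_halvingChain he hi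
  sub_half_mem_orthogonal j hj hjN := by
    simp only [halvingChain, if_pos hj, add_sub_cancel_left]
    exact smul_mem _ _ <| mem_orthogonal_span_of_inner_eq_zero <| by
      rintro _ ⟨i, hi, rfl⟩
      exact inner_halvingChain_eq_zero he hi hjN
  mem_orthogonal r hr hℓr := by
    obtain ⟨j, rfl⟩ : ∃ j, r = j + 1 := ⟨r - 1, by omega⟩
    simp only [halvingChain, if_neg (show ¬j < ℓ by omega)]
    exact mem_orthogonal_span_of_inner_eq_zero <| by
      rintro _ ⟨i, hi, rfl⟩
      exact inner_halvingChain_eq_zero he hi hr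

end InnerProductSpace

section EuclideanLattice

variable {n : ℕ}

lemma latticeOf_eq_span (b : Fin n → Evec n) : latticeOf b = span ℤ (range b) := by
  ext x
  simp [latticeOf, Submodule.mem_span_range_iff_exists_fun, Int.cast_smul_eq_zsmul, eq_comm]

lemma minVecs_eq_of_forall {L M : Set (Evec n)} (hML : M ⊆ L) (hM : ∀ x ∈ M, ‖x‖ = 1)
    (hMne : M.Nonempty) (hL : ∀ x ∈ L, x ≠ 0 → 1 ≤ ‖x‖ ∧ (‖x‖ = 1 → x ∈ M)) :
    minVecs L = M := by
  obtain ⟨y, hy⟩ := hMne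
  have hne : ∀ x ∈ M, x ≠ 0 := fun x hx h => by simpa [h] using hM x hx
  ext x
  refine ⟨fun ⟨hxL, hx0, hmin⟩ => ?_, fun hx => ⟨hML hx, hne x hx, fun z hz hz0 => ?_⟩⟩
  · have := hmin y (hML hy) (hne y hy)
    rw [hM y hy] at this
    exact (hL x hxL hx0).2 (le_antisymm this (hL x hxL hx0).1)
  · rw [hM x hx]
    exact (hL z hz hz0).1

lemma IsHalvingChain.minVecs_span_eq {g : ℕ → Evec n} {ℓ N : ℕ} (hg : IsHalvingChain g ℓ N)
    (hℓ : ℓ < N) : minVecs (span ℤ (g '' Iio N) : Set (Evec n)) = chainMinVecs g ℓ N :=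
  minVecs_eq_of_forall (chainMinVecs_subset_span g hℓ)
    (fun _ => hg.norm_eq_one_of_mem_chainMinVecs hℓ)
    ⟨g 0, Or.inl (Or.inl ⟨0, mem_Iio.mpr (by omega), rfl⟩)⟩
    (fun _ hx hx0 => hg.one_le_norm_of_mem_span le_rfl hx hx0)

lemma arccos_inv_two : Real.arccos 2⁻¹ = Real.pi / 3 := by
  rw [← one_div, ← Real.cos_pi_div_three,
    Real.arccos_cos (by positivity) (by linarith [Real.pi_pos])]

lemma IsHalvingChain.weaklyNearlyOrth {g : ℕ → Evec n} {ℓ : ℕ} (hg : IsHalvingChain g ℓ n) :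
    WeaklyNearlyOrth fun i : Fin n => g i := by
  intro i _
  have himage : (fun i : Fin n => g i) '' {j | j < i} = g '' Iio (i : ℕ) := by
    rw [← Fin.image_val_Iio, image_image]
    rfl
  rw [subAngle, himage, hg.norm_eq_one i i.2, div_one, ← arccos_inv_two]
  exact Real.arccos_le_arccos (hg.norm_starProjection_le i.2)

def stdVec (n k : ℕ) : Evec n := if h : k < n then EuclideanSpace.single ⟨k, h⟩ 1 else 0

lemma inner_stdVec {n : ℕ} : ∀ i < n, ∀ k < n,
    ⟪stdVec n i, stdVec n k⟫ = if i = k then 1 else 0 := by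
  intro i hi k hk
  simp [stdVec, hi, hk, EuclideanSpace.inner_single_left, Fin.ext_iff]

theorem exists_wellRounded_weaklyNearlyOrth {n ℓ : ℕ} (hℓ : ℓ < n) :
    ∃ b : Fin n → Evec n, LinearIndependent ℝ b ∧ WeaklyNearlyOrth b ∧
      IsWellRounded (latticeOf b) ∧ (minVecs (latticeOf b)).ncard = 2 * n + 2 * ℓ := by
  set g := halvingChain (stdVec n) ℓ
  have hg : IsHalvingChain g ℓ n := isHalvingChain_halvingChain inner_stdVec
  have hrange : range (fun i : Fin n => g i) = g '' Iio n := by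
    rw [← Fin.range_val, ← range_comp]
    rfl
  have hL : latticeOf (fun i : Fin n => g i) = span ℤ (g '' Iio n) := by
    rw [latticeOf_eq_span, hrange]
  have hli : LinearIndependent ℝ (fun i : Fin n => g i) :=
    hg.linearIndepOn.comp (fun i : Fin n => (⟨i, i.2⟩ : Iio n)) fun _ _ h =>
      Fin.ext (congrArg Subtype.val h)
  refine ⟨fun i => g i, hli, hg.weaklyNearlyOrth, ?_, ?_⟩
  · rw [IsWellRounded, hL, hg.minVecs_span_eq hℓ, eq_top_iff,
      ← hli.span_eq_top_of_card_eq_finrank' (by simp)]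
    exact span_mono (hrange ▸ fun x hx => Or.inl (Or.inl hx))
  · rw [hL, hg.minVecs_span_eq hℓ, ncard_chainMinVecs hg.linearIndepOn hℓ]

end EuclideanLattice

end

/-- intermediate counts of minimal vectors for well-rounded
lattices with weakly nearly orthogonal bases; every even number between `3n`
and `4n - 2` occurs. -/
theorem stmt_12 (n : ℕ) (hn : 3 ≤ n) :
    (∀ m : ℕ, 1 ≤ m → (Even n → 2 * m ≤ n - 2) → (¬ Even n → 2 * m ≤ n - 1) →
      ∃ b : Fin n → Evec n, LinearIndependent ℝ b ∧ WeaklyNearlyOrth b ∧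
        IsWellRounded (latticeOf b) ∧
        (minVecs (latticeOf b)).ncard =
          if Even n then 3 * n + 2 * m else 3 * n - 1 + 2 * m) ∧
    (∀ k : ℕ, 3 * n ≤ k → k ≤ 4 * n - 2 → Even k →
      ∃ b : Fin n → Evec n, LinearIndependent ℝ b ∧ WeaklyNearlyOrth b ∧
        IsWellRounded (latticeOf b) ∧ (minVecs (latticeOf b)).ncard = k) := by
  simp only [Nat.even_iff] at *
  refine ⟨fun m hm heven hodd => ?_, fun k hk3 hk4 hk => ?_⟩
  · obtain ⟨b, hb, hwno, hwr, hcard⟩ :=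
      exists_wellRounded_weaklyNearlyOrth (ℓ := n / 2 + m) (n := n) (by omega)
    refine ⟨b, hb, hwno, hwr, ?_⟩
    rw [hcard]
    split_ifs <;> omega
  · obtain ⟨b, hb, hwno, hwr, hcard⟩ :=
      exists_wellRounded_weaklyNearlyOrth (ℓ := k / 2 - n) (n := n) (by omega)
    exact ⟨b, hb, hwno, hwr, by omega⟩
end
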